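/- arXiv:solv-int/9707017 — 6 statements merged into one kernel-verified Lean document; each statement's English description precedes it below -/
import Mathlib

section
/- Let P be a Poisson tensor on a manifold M and define the bracket on 1-forms by <{α₁,α₂}_P, X> = L_{Pα₁}<α₂,X> − L_{Pα₂}<α₁,X> − <α₁, L_X(P)α₂>. Then for all 1-forms α₁, α₂: P{α₁,α₂}_P = [Pα₁, Pα₂], i.e., P intertwines the bracket on 1-forms with the Lie bracket of vector fields. -/
/-! A coordinate model of Poisson geometry: the manifold is a Euclidean space
`ℝᵐ` (a global chart), a bivector field is a smooth field of skew-symmetric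
linear maps `P : T*M → TM` (cotangent and tangent spaces being identified with
`ℝᵐ` via the inner product), `gradient f` represents the differential `df`, and
Lie derivatives are expressed through `fderiv`. -/

noncomputable section

/-- points of the manifold `M = ℝᵐ` -/
abbrev Pt (m : ℕ) := EuclideanSpace ℝ (Fin m)

/-- The Poisson bracket of functions associated with a bivector field `P`:
`{f,g} = ⟨df, P dg⟩`. -/
def pbr {m : ℕ} (P : Pt m → Pt m →L[ℝ] Pt m) (f g : Pt m → ℝ) : Pt m → ℝ :=
  fun x => (inner ℝ (gradient f x) (P x (gradient g x)) : ℝ)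

/-- `P` is skew-symmetric (so that `pbr P` is skew-symmetric). -/
def SkewBivector {m : ℕ} (P : Pt m → Pt m →L[ℝ] Pt m) : Prop :=
  ∀ (x a b : Pt m), (inner ℝ a (P x b) : ℝ) = - (inner ℝ b (P x a) : ℝ)

/-- `P` is a Poisson tensor: its bracket satisfies the Jacobi identity on smooth
functions. -/
def JacobiBivector {m : ℕ} (P : Pt m → Pt m →L[ℝ] Pt m) : Prop :=
  ∀ f g h : Pt m → ℝ, ContDiff ℝ (⊤ : ℕ∞) f → ContDiff ℝ (⊤ : ℕ∞) g → ContDiff ℝ (⊤ : ℕ∞) h →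
    ∀ x, pbr P f (pbr P g h) x + pbr P h (pbr P f g) x + pbr P g (pbr P h f) x = 0

/-- The Lie derivative `(L_X P)` of a bivector field `P` along a vector field `X`,
evaluated at `x` against (the values `a`, `b` at `x` of) two covector fields:
`(L_X P)(α,β) = X(P(α,β)) - P(L_X α, β) - P(α, L_X β)`, where for a covector the
Lie derivative contributes the transpose Jacobian term `(DX)ᵀ a`. -/
def lieT {m : ℕ} (X : Pt m → Pt m) (P : Pt m → Pt m →L[ℝ] Pt m)
    (x a b : Pt m) : ℝ :=
  fderiv ℝ (fun y => (inner ℝ a (P y b) : ℝ)) x (X x)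
    - (inner ℝ (ContinuousLinearMap.adjoint (fderiv ℝ X x) a) (P x b) : ℝ)
    - (inner ℝ a (P x (ContinuousLinearMap.adjoint (fderiv ℝ X x) b)) : ℝ)

-- helper: inner of gradient
lemma inner_gradient_eq {m : ℕ} (f : Pt m → ℝ) (x v : Pt m) :
    (inner ℝ (gradient f x) v : ℝ) = fderiv ℝ f x v := by
  rw [gradient, InnerProductSpace.toDual_symm_apply]

lemma grad_linear {m : ℕ} (c : Pt m) (x : Pt m) :
    gradient (fun y => (inner ℝ c y : ℝ)) x = c := by
  apply ext_inner_right ℝ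
  intro v
  rw [inner_gradient_eq,
    fderiv_inner_apply (𝕜 := ℝ) (differentiableAt_const c) differentiableAt_fun_id]
  simp

lemma contDiff_linear {m : ℕ} (c : Pt m) : ContDiff ℝ (⊤ : ℕ∞) (fun y => (inner ℝ c y : ℝ)) :=
  ContDiff.inner ℝ contDiff_const contDiff_id

section helpers
variable {m : ℕ} {P : Pt m → Pt m →L[ℝ] Pt m}

lemma fderiv_P_const (hs : ContDiff ℝ (⊤ : ℕ∞) P) (b x : Pt m) :
    fderiv ℝ (fun y => P y b) x = (fderiv ℝ P x).flip b := by
  rw [fderiv_clm_apply ((hs.differentiable (by simp)) x) (differentiableAt_const b)]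
  simp

lemma fderiv_inner_P (hs : ContDiff ℝ (⊤ : ℕ∞) P) (a b x v : Pt m) :
    fderiv ℝ (fun y => (inner ℝ a (P y b) : ℝ)) x v = (inner ℝ a (fderiv ℝ P x v b) : ℝ) := by
  rw [fderiv_inner_apply (𝕜 := ℝ) (differentiableAt_const a)
    (((hs.differentiable (by simp)) x).clm_apply (differentiableAt_const b)),
    fderiv_P_const hs]
  simp

lemma dskew (hs : ContDiff ℝ (⊤ : ℕ∞) P) (hsk : SkewBivector P) (x v a b : Pt m) :
    (inner ℝ a (fderiv ℝ P x v b) : ℝ) = - (inner ℝ b (fderiv ℝ P x v a) : ℝ) := by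
  have h : (fun y => (inner ℝ a (P y b) : ℝ)) = (fun y => -(inner ℝ b (P y a) : ℝ)) :=
    funext fun y => hsk y a b
  have := fderiv_inner_P hs a b x v
  rw [h] at this
  rw [← this, fderiv_fun_neg, ContinuousLinearMap.neg_apply, fderiv_inner_P hs b a x v]

lemma jacobi_const (hs : ContDiff ℝ (⊤ : ℕ∞) P) (hsk : SkewBivector P) (hj : JacobiBivector P)
    (x c d e : Pt m) :
    (inner ℝ d (fderiv ℝ P x (P x c) e) : ℝ) + (inner ℝ c (fderiv ℝ P x (P x e) d) : ℝ)
      + (inner ℝ e (fderiv ℝ P x (P x d) c) : ℝ) = 0 := by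
  have key : ∀ u v w : Pt m,
      pbr P (fun y => (inner ℝ u y : ℝ))
        (pbr P (fun y => (inner ℝ v y : ℝ)) (fun y => (inner ℝ w y : ℝ))) x
        = - (inner ℝ v (fderiv ℝ P x (P x u) w) : ℝ) := by
    intro u v w
    have hvw : pbr P (fun y => (inner ℝ v y : ℝ)) (fun y => (inner ℝ w y : ℝ))
        = fun y => (inner ℝ v (P y w) : ℝ) := by
      funext y
      rw [pbr, grad_linear, grad_linear]
    rw [pbr, hvw, grad_linear,
      hsk x u (gradient (fun y => (inner ℝ v (P y w) : ℝ)) x),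
      inner_gradient_eq, fderiv_inner_P hs]
  have := hj _ _ _ (contDiff_linear c) (contDiff_linear d) (contDiff_linear e) x
  rw [key c d e, key e c d, key d e c] at this
  linarith

end helpers
/-- let `P` be a Poisson tensor and define the bracket of 1-forms
`{α₁,α₂}_P` by
`⟨{α₁,α₂}_P, X⟩ = L_{Pα₁}⟨α₂,X⟩ - L_{Pα₂}⟨α₁,X⟩ - ⟨α₁, L_X(P) α₂⟩`
for every vector field `X`.  Then `P{α₁,α₂}_P = [Pα₁, Pα₂]`: the map `P`
intertwines the bracket of 1-forms with the Lie bracket of vector fields. -/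
theorem poisson_tensor_forms_to_fields {m : ℕ}
    (P : Pt m → Pt m →L[ℝ] Pt m)
    (hs : ContDiff ℝ (⊤ : ℕ∞) P) (hsk : SkewBivector P) (hj : JacobiBivector P)
    (α1 α2 : Pt m → Pt m) (hα1 : ContDiff ℝ (⊤ : ℕ∞) α1) (hα2 : ContDiff ℝ (⊤ : ℕ∞) α2)
    (γ : Pt m → Pt m)
    -- `γ = {α₁,α₂}_P` : the defining property of the bracket of 1-forms
    (hγ : ∀ X : Pt m → Pt m, ContDiff ℝ (⊤ : ℕ∞) X → ∀ x : Pt m,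
      (inner ℝ (γ x) (X x) : ℝ) =
        fderiv ℝ (fun y => (inner ℝ (α2 y) (X y) : ℝ)) x (P x (α1 x))
          - fderiv ℝ (fun y => (inner ℝ (α1 y) (X y) : ℝ)) x (P x (α2 x))
          - lieT X P x (α1 x) (α2 x)) :
    -- `Pγ = [Pα₁, Pα₂]` (Lie bracket of the two Hamiltonian-type vector fields)
    ∀ x : Pt m,
      P x (γ x) =
        fderiv ℝ (fun y => P y (α2 y)) x (P x (α1 x))
          - fderiv ℝ (fun y => P y (α1 y)) x (P x (α2 x)) := by
  intro x
  apply ext_inner_left ℝ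
  intro b
  have hPd : Differentiable ℝ P := hs.differentiable (by simp)
  have hα1d : Differentiable ℝ α1 := hα1.differentiable (by simp)
  have hα2d : Differentiable ℝ α2 := hα2.differentiable (by simp)
  have hX : ContDiff ℝ (⊤ : ℕ∞) (fun y => P y b) := hs.clm_apply contDiff_const
  have hγb := hγ (fun y => P y b) hX x
  -- expand the two outer fderiv terms
  have e2 : ∀ (α : Pt m → Pt m), Differentiable ℝ α → ∀ v : Pt m,
      fderiv ℝ (fun y => (inner ℝ (α y) (P y b) : ℝ)) x v
        = (inner ℝ (α x) (fderiv ℝ P x v b) : ℝ)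
          + (inner ℝ (fderiv ℝ α x v) (P x b) : ℝ) := by
    intro α hα v
    rw [fderiv_inner_apply (𝕜 := ℝ) (hα x) ((hPd x).clm_apply (differentiableAt_const b)),
        fderiv_P_const hs]
    simp
  -- expand lieT
  have elie : lieT (fun y => P y b) P x (α1 x) (α2 x)
      = (inner ℝ (α1 x) (fderiv ℝ P x (P x b) (α2 x)) : ℝ)
        - (inner ℝ (α1 x) (fderiv ℝ P x (P x (α2 x)) b) : ℝ)
        + (inner ℝ (α2 x) (fderiv ℝ P x (P x (α1 x)) b) : ℝ) := by
    simp only [lieT, fderiv_inner_P hs, fderiv_P_const hs]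
    rw [hsk x (α1 x), ContinuousLinearMap.adjoint_inner_left,
        ContinuousLinearMap.adjoint_inner_left]
    simp only [ContinuousLinearMap.flip_apply]
    ring
  rw [e2 α2 hα2d, e2 α1 hα1d, elie] at hγb
  -- expand the target fderivs
  have etar : ∀ (α : Pt m → Pt m), Differentiable ℝ α → ∀ v : Pt m,
      fderiv ℝ (fun y => P y (α y)) x v
        = P x (fderiv ℝ α x v) + fderiv ℝ P x v (α x) := by
    intro α hα v
    rw [fderiv_clm_apply (hPd x) (hα x)]
    simp
  rw [inner_sub_right, etar α2 hα2d, etar α1 hα1d, inner_add_right, inner_add_right]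
  have hL : (inner ℝ (γ x) (P x b) : ℝ) = - (inner ℝ b (P x (γ x)) : ℝ) := hsk x (γ x) b
  have s1 : (inner ℝ (α1 x) (fderiv ℝ P x (P x (α2 x)) b) : ℝ)
      = - (inner ℝ b (fderiv ℝ P x (P x (α2 x)) (α1 x)) : ℝ) := dskew hs hsk _ _ _ _
  have s2 : (inner ℝ (α2 x) (fderiv ℝ P x (P x (α1 x)) b) : ℝ)
      = - (inner ℝ b (fderiv ℝ P x (P x (α1 x)) (α2 x)) : ℝ) := dskew hs hsk _ _ _ _
  have s3 : (inner ℝ (α1 x) (fderiv ℝ P x (P x b) (α2 x)) : ℝ)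
      = - (inner ℝ (α2 x) (fderiv ℝ P x (P x b) (α1 x)) : ℝ) := dskew hs hsk _ _ _ _
  have jac := jacobi_const hs hsk hj x (α1 x) b (α2 x)
  have h1 : (inner ℝ b (P x (fderiv ℝ α2 x (P x (α1 x)))) : ℝ)
      = - (inner ℝ (fderiv ℝ α2 x (P x (α1 x))) (P x b) : ℝ) := by
    rw [hsk x (fderiv ℝ α2 x (P x (α1 x))) b]; ring
  have h2 : (inner ℝ b (P x (fderiv ℝ α1 x (P x (α2 x)))) : ℝ)
      = - (inner ℝ (fderiv ℝ α1 x (P x (α2 x))) (P x b) : ℝ) := by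
    rw [hsk x (fderiv ℝ α1 x (P x (α2 x))) b]; ring
  rw [hL] at hγb
  linarith
end
end

section
/- Let S be a loop in sl(n+1) of the form S = T + B where B is the superdiagonal matrix of 1's and T takes values in the span of matrix degrees ≤ 0 (lower-triangular including diagonal). If a loop V in sl(n+1) satisfies both [A, V] = 0 and V_x + [V, S] = 0, where A is the bottom-left corner matrix, then V = 0. Equivalently, Ker P_0 ∩ Ker P_1 = {0} at every point of the symplectic leaf S. -/
/-- let `S = T + B` be a loop in `sl(n+1)` where `B` is the
superdiagonal matrix of 1's and `T` takes values in the span of the matrix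
degrees ≤ 0 (lower triangular including the diagonal).  If a (differentiable,
trace-free) loop `V` in `sl(n+1)` satisfies `[A,V] = 0` and `V_x + [V,S] = 0`
(where `A` is the bottom-left corner matrix), then `V = 0`; i.e.
`Ker P₀ ∩ Ker P₁ = {0}` along the symplectic leaf `S`. -/
theorem kernels_trivial_intersection (n : ℕ)
    (A : Matrix (Fin (n + 1)) (Fin (n + 1)) ℝ)
    (hA : A = Matrix.of fun i j : Fin (n + 1) =>
      if i = Fin.last n ∧ j = 0 then (1 : ℝ) else 0)
    (S V : ℝ → Matrix (Fin (n + 1)) (Fin (n + 1)) ℝ)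
    -- `S = T + B`, with `T` of degree ≤ 0: above the diagonal `S` coincides
    -- with the superdiagonal matrix `B` of 1's
    (hS : ∀ (x : ℝ) (i j : Fin (n + 1)), (i : ℕ) < (j : ℕ) →
      S x i j = if (j : ℕ) = (i : ℕ) + 1 then 1 else 0)
    (hVdiff : ∀ i j, Differentiable ℝ fun x => V x i j)
    (hVtr : ∀ x, (V x).trace = 0)
    -- `V ∈ Ker P₀` : `[A, V] = 0`
    (hker0 : ∀ x, A * V x - V x * A = 0)
    -- `V ∈ Ker P₁` : `V_x + [V, S] = 0`
    (hker1 : ∀ (x : ℝ) (i j : Fin (n + 1)),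
      deriv (fun y => V y i j) x + (V x * S x - S x * V x) i j = 0) :
    ∀ x, V x = 0 := by
  -- entrywise consequences of `[A,V] = 0`
  have hk0 : ∀ (x : ℝ) (i j : Fin (n + 1)),
      (if i = Fin.last n then V x 0 j else 0)
        = if j = 0 then V x i (Fin.last n) else 0 := by
    intro x i j
    have h := congrFun (congrFun (hker0 x) i) j
    have hAV : (A * V x) i j = if i = Fin.last n then V x 0 j else 0 := by
      rw [Matrix.mul_apply, hA]; simp [ite_and]
    have hVA : (V x * A) i j = if j = 0 then V x i (Fin.last n) else 0 := by
      rw [Matrix.mul_apply, hA]; simp [ite_and]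
    have : (A * V x - V x * A) i j = 0 := by rw [h]; rfl
    rw [Matrix.sub_apply, hAV, hVA] at this
    linarith
  -- first row of `V` vanishes off the diagonal
  have hrow : ∀ (x : ℝ) (j : Fin (n + 1)), j ≠ 0 → V x 0 j = 0 := by
    intro x j hj
    have := hk0 x (Fin.last n) j
    simpa [hj] using this
  -- last column of `V` vanishes off the diagonal
  have hcol : ∀ (x : ℝ) (i : Fin (n + 1)), i ≠ Fin.last n →
      V x i (Fin.last n) = 0 := by
    intro x i hi
    have := (hk0 x i 0).symm
    simpa [hi] using this
  -- the commutator equation, entrywise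
  have hcomm : ∀ (x : ℝ) (i j : Fin (n + 1)),
      deriv (fun y => V y i j) x
        + (∑ k, V x i k * S x k j) - ∑ k, S x i k * V x k j = 0 := by
    intro x i j
    have h := hker1 x i j
    rw [Matrix.sub_apply, Matrix.mul_apply, Matrix.mul_apply] at h
    linarith
  -- Step 1: induction over the rows shows that the strict upper triangle of
  -- `V` vanishes and the diagonal is constant.
  have step1 : ∀ m : ℕ, ∀ (i j : Fin (n + 1)), (i : ℕ) = m → m ≤ (j : ℕ) →
      ∀ x, V x i j = if (j : ℕ) = m then V x 0 0 else 0 := by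
    intro m
    induction m using Nat.strong_induction_on with
    | _ m IH =>
      intro i j him hmj x
      match m, IH with
      | 0, _ =>
        have hi0 : i = 0 := by ext; simpa using him
        subst hi0
        by_cases hj : j = 0
        · subst hj; simp
        · have : ((j : ℕ) ≠ 0) := by
            intro h; exact hj (by ext; simpa using h)
          rw [hrow x j hj, if_neg this]
      | (m + 1), IH =>
        -- the row above
        have hmn : m + 1 ≤ n := by
          have := i.isLt; omega
        set r : Fin (n + 1) := ⟨m, by omega⟩ with hr
        -- `V y r j = 0` for all `y` since `(j : ℕ) ≥ m + 1 > m`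
        have hrj : ∀ y, V y r j = 0 := by
          intro y
          have := IH m (by omega) r j rfl (by omega) y
          rwa [if_neg (by omega)] at this
        have hderiv : deriv (fun y => V y r j) x = 0 := by
          have : (fun y => V y r j) = fun _ => (0 : ℝ) := funext hrj
          rw [this, deriv_const]
        have heq := hcomm x r j
        rw [hderiv] at heq
        -- second sum: `∑ k, S x r k * V x k j = V x i j`
        have hS1 : S x r i = 1 := by
          rw [hS x r i (by simp [hr]; omega)]
          simp only [hr]; rw [if_pos (by omega)]
        have hsum2 : (∑ k, S x r k * V x k j) = S x r i * V x i j := by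
          apply Finset.sum_eq_single_of_mem i (Finset.mem_univ i)
          intro b _ hb
          rcases lt_trichotomy (b : ℕ) (m + 1) with hlt | heqb | hgt
          · have hVbj : V x b j = 0 := by
              have := IH (b : ℕ) (by omega) b j rfl (by omega) x
              rwa [if_neg (by omega)] at this
            rw [hVbj, mul_zero]
          · exact absurd (Fin.ext (heqb.trans him.symm)) hb
          · have : S x r b = 0 := by
              rw [hS x r b (by simp [hr]; omega)]
              simp only [hr]; rw [if_neg (by omega)]
            rw [this, zero_mul]
        rw [hS1, one_mul] at hsum2
        -- first sum: `∑ k, V x r k * S x k j = if (j:ℕ) = m+1 then V x 0 0 else 0`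
        have hsum1 : (∑ k, V x r k * S x k j)
            = if (j : ℕ) = m + 1 then V x 0 0 else 0 := by
          have hmain : (∑ k, V x r k * S x k j) = V x r r * S x r j := by
            apply Finset.sum_eq_single_of_mem r (Finset.mem_univ r)
            intro b _ hb
            rcases lt_trichotomy (b : ℕ) m with hlt | heqb | hgt
            · have : S x b j = 0 := by
                rw [hS x b j (by omega)]
                rw [if_neg (by omega)]
              rw [this, mul_zero]
            · exact absurd (Fin.ext (show (b:ℕ) = (r:ℕ) from heqb)) hb
            · have : V x r b = 0 := by
                have := IH m (by omega) r b rfl (by omega) x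
                rwa [if_neg (by omega)] at this
              rw [this, zero_mul]
          have h1 : V x r r = V x 0 0 := by
            have := IH m (by omega) r r rfl (le_refl m) x
            rwa [if_pos rfl] at this
          have h2 : S x r j = if (j : ℕ) = m + 1 then 1 else 0 := by
            rw [hS x r j (by simp [hr]; omega)]
          rw [hmain, h1, h2]
          split_ifs <;> ring
        rw [hsum1, hsum2] at heq
        split_ifs at heq ⊢ <;> linarith
  -- diagonal is constant
  have hdiag : ∀ (i : Fin (n + 1)) (x : ℝ), V x i i = V x 0 0 := by
    intro i x
    have := step1 (i : ℕ) i i rfl (le_refl _) x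
    rwa [if_pos rfl] at this
  -- trace-free ⇒ the diagonal entry vanishes
  have h00 : ∀ x, V x 0 0 = 0 := by
    intro x
    have htr := hVtr x
    rw [Matrix.trace] at htr
    have : (∑ i : Fin (n + 1), (V x).diag i) = (n + 1 : ℝ) * V x 0 0 := by
      rw [Finset.sum_congr rfl (fun i _ => by
        simpa [Matrix.diag] using hdiag i x)]
      simp [Finset.card_univ, mul_comm]
    rw [this] at htr
    have hne : (n + 1 : ℝ) ≠ 0 := by positivity
    exact (mul_eq_zero.mp htr).resolve_left hne
  -- the whole upper triangle, including the diagonal, vanishes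
  have hupper : ∀ (i j : Fin (n + 1)) (x : ℝ), (i : ℕ) ≤ (j : ℕ) →
      V x i j = 0 := by
    intro i j x hij
    have := step1 (i : ℕ) i j rfl hij x
    rw [h00 x] at this
    rw [this]; split_ifs <;> rfl
  -- Step 3: downward induction over columns kills everything
  have step3 : ∀ d : ℕ, ∀ (j : Fin (n + 1)), n - d ≤ (j : ℕ) →
      ∀ (i : Fin (n + 1)) (x : ℝ), V x i j = 0 := by
    intro d
    induction d with
    | zero =>
      intro j hj i x
      exact hupper i j x (by have := i.isLt; omega)
    | succ d IHd =>
      intro j hj i x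
      by_cases hcase : n - d ≤ (j : ℕ)
      · exact IHd j hcase i x
      -- here `(j : ℕ) = n - d - 1` and `d < n`
      have hjv : (j : ℕ) + 1 = n - d := by omega
      set c : Fin (n + 1) := ⟨(j : ℕ) + 1, by omega⟩ with hc
      have hVc : ∀ (k : Fin (n + 1)) (y : ℝ), V y k c = 0 := by
        intro k y
        exact IHd c (by simp [hc]; omega) k y
      have hderiv : deriv (fun y => V y i c) x = 0 := by
        have : (fun y => V y i c) = fun _ => (0 : ℝ) := funext (hVc i)
        rw [this, deriv_const]
      have heq := hcomm x i c
      rw [hderiv] at heq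
      have hsum2 : (∑ k, S x i k * V x k c) = 0 :=
        Finset.sum_eq_zero fun k _ => by rw [hVc k x, mul_zero]
      have hSjc : S x j c = 1 := by
        rw [hS x j c (by simp [hc])]; simp [hc]
      have hsum1 : (∑ k, V x i k * S x k c) = V x i j * S x j c := by
        apply Finset.sum_eq_single_of_mem j (Finset.mem_univ j)
        intro b _ hb
        rcases lt_trichotomy (b : ℕ) (j : ℕ) with hlt | heqb | hgt
        · have : S x b c = 0 := by
            rw [hS x b c (by simp [hc]; omega)]
            simp only [hc]; rw [if_neg (by omega)]
          rw [this, mul_zero]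
        · exact absurd (Fin.ext heqb) hb
        · have : V x i b = 0 := IHd b (by omega) i x
          rw [this, zero_mul]
      rw [hSjc, mul_one] at hsum1
      rw [hsum1, hsum2] at heq
      linarith
  intro x
  ext i j
  exact step3 n j (by omega) i x
end

section
/- Let (M, P_0, P_1) be a bihamiltonian manifold with Marsden–Ratiu reduction data: symplectic leaf S of P_0, distribution E on S, quotient N = S/E, and a transversal submanifold Q ⊂ S meeting each leaf of E exactly once. If Ker(P_0) ∩ Ker(P_1) = {0} at every point of Q, then the lifting map J_Q : Γ_Q → X*(N) is injective (hence, being surjective, an isomorphism). -/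
/-- injectivity of `J_Q`, pointwise linear form: in the
Marsden–Ratiu reduction of a bihamiltonian manifold `(M, P₀, P₁)` — with
symplectic leaf `S` of `P₀` (so `T_s S = range P₀`), distribution
`D = P₁(ker P₀)`, induced foliation `E = D ∩ TS` of `S`, quotient `N = S/E`, and
transversal submanifold `Q ⊆ S` meeting every leaf of `E` exactly once (so that
`TS = TQ ⊕ E`) — if `ker P₀ ∩ ker P₁ = {0}` along `Q`, then the lifting map
`J_Q : Γ_Q → X*(N)` is injective (hence, being surjective, an isomorphism).

Liftings `β ∈ Γ_Q` of a 1-form on `N` satisfy: `P_λ β` is tangent to `Q` for every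
`λ`, and `β` annihilates `D`; two liftings have the same image under `J_Q` exactly
when they agree on vectors tangent to `Q` (`π|_Q` being a diffeomorphism onto `N`). -/
theorem JQ_injective
    {V : Type} [AddCommGroup V] [Module ℝ V]
    (P0 P1 : Module.Dual ℝ V →ₗ[ℝ] V)
    (hskew0 : ∀ a b : Module.Dual ℝ V, a (P0 b) = - b (P0 a))
    (hskew1 : ∀ a b : Module.Dual ℝ V, a (P1 b) = - b (P1 a))
    (TS TQ E D : Submodule ℝ V)
    (hTS : TS = LinearMap.range P0)
    (hD : D = Submodule.span ℝ {w : V | ∃ f : Module.Dual ℝ V, P0 f = 0 ∧ w = P1 f})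
    (hE : E = D ⊓ TS)
    (htransv₁ : TQ ⊔ E = TS) (htransv₂ : TQ ⊓ E = ⊥)
    (hker : ∀ f : Module.Dual ℝ V, P0 f = 0 → P1 f = 0 → f = 0)
    (β1 β2 : Module.Dual ℝ V)
    (hβ1D : ∀ w ∈ D, β1 w = 0) (hβ2D : ∀ w ∈ D, β2 w = 0)
    (hβ1Q : ∀ lam : ℝ, P1 β1 + lam • P0 β1 ∈ TQ)
    (hβ2Q : ∀ lam : ℝ, P1 β2 + lam • P0 β2 ∈ TQ)
    (hJ : ∀ w ∈ TQ, β1 w = β2 w) :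
    β1 = β2 := by
  set β := β1 - β2 with hβ
  have hβTQ : ∀ w ∈ TQ, β w = 0 := by
    intro w hw
    simp [hβ, hJ w hw]
  have hβD : ∀ w ∈ D, β w = 0 := by
    intro w hw
    simp [hβ, hβ1D w hw, hβ2D w hw]
  have hTQTS : TQ ≤ TS := htransv₁ ▸ le_sup_left
  have hβTS : ∀ w ∈ TS, β w = 0 := by
    intro w hw
    rw [← htransv₁] at hw
    obtain ⟨a, ha, b, hb, rfl⟩ := Submodule.mem_sup.mp hw
    have hbD : b ∈ D := (hE ▸ hb).1
    rw [map_add, hβTQ a ha, hβD b hbD, add_zero]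
  have hP0β : P0 β = 0 := by
    rw [← Module.forall_dual_apply_eq_zero_iff ℝ]
    intro f
    have : β (P0 f) = 0 := hβTS _ (hTS ▸ LinearMap.mem_range_self P0 f)
    have h := hskew0 β f
    rw [this] at h
    linarith [h]
  have hP1βD : P1 β ∈ D := by
    rw [hD]
    exact Submodule.subset_span ⟨β, hP0β, rfl⟩
  have hP1βTQ : P1 β ∈ TQ := by
    have h1 := hβ1Q 0
    have h2 := hβ2Q 0
    simp only [zero_smul, add_zero] at h1 h2
    have := Submodule.sub_mem TQ h1 h2
    rwa [← map_sub] at this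
  have hP1β : P1 β = 0 := by
    have hmem : P1 β ∈ TQ ⊓ E := by
      refine ⟨hP1βTQ, ?_⟩
      rw [hE]
      exact ⟨hP1βD, hTQTS hP1βTQ⟩
    rw [htransv₂] at hmem
    exact hmem
  have := hker β hP0β hP1β
  exact sub_eq_zero.mp this
end

section
/- In the algebra of pseudodifferential operators on the circle, let L = ∂^{n+1} − Σ_{j=0}^{n-1} u_j ∂^j and let the functions V^j_l (j = 0,…,n+1, l = 0,…,n) satisfy the recursion: V^{k+1}_0 = (V^k_0)_x + V^k_n (u_0 + λ), V^{k+1}_l = (V^k_l)_x + V^k_{l-1} + u_l V^k_n for l = 1,…,n (with u_n := 0 and u_l appearing as coefficients), starting from given V^0_l. Set E := −Σ_{j=0}^{n} V^0_j ∂^j. Then for each j = 0,…,n+1: ∂^j E = −Σ_{l=0}^{n} V^j_l ∂^l + (∂^j E L^{-1})_+ (L − λ), where (·)_+ denotes the purely differential part of a pseudodifferential operator. -/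
/-!  A self-contained model of the algebra of pseudodifferential operators on the
circle (or over an abstract differential ring `(R, d)`).

A pseudodifferential operator `A = ∑_{i ≤ N} a_i ∂^i` is encoded by the sequence of
its coefficients `A : ℤ → R` (`A i = a_i`, vanishing for large `i`).  The product is
the standard one, determined by the generalized Leibniz rule
`∂^i ∘ b = ∑_{k ≥ 0} C(i,k) b^{(k)} ∂^{i-k}` with generalized binomial coefficients
`C(i,k) = Ring.choose i k`. -/

noncomputable section

namespace GD

variable {R : Type} [CommRing R]

/-- Pseudodifferential operators encoded by coefficient sequences:
`A : ℤ → R` stands for `∑ i, (A i) ∂^i`. -/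
abbrev PDO (R : Type) := ℤ → R

/-- The product of pseudodifferential operators, with respect to the derivation `d`
of the coefficient ring.  (The `finsum` is a finite sum whenever the two factors
have bounded order, which is the case throughout.) -/
def pmul (d : R → R) (A B : PDO R) : PDO R :=
  fun m => ∑ᶠ p : ℤ × ℕ,
    (Ring.choose p.1 p.2 : ℤ) • (A p.1 * d^[p.2] (B (m - p.1 + (p.2 : ℤ))))

/-- The single-term operator `a ∂^j`. -/
def term (a : R) (j : ℤ) : PDO R := fun m => if m = j then a else 0

/-- The identity operator `1 = ∂^0`. -/
def one : PDO R := term (1 : R) 0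

/-- The purely differential part `A₊` of a pseudodifferential operator
(the part with nonnegative powers of `∂`); `A₋ = A - A₊`. -/
def plus (A : PDO R) : PDO R := fun m => if 0 ≤ m then A m else 0

/-- `d` is a derivation of `R`. -/
def IsDeriv (d : R → R) : Prop :=
  (∀ a b, d (a + b) = d a + d b) ∧ ∀ a b, d (a * b) = d a * b + a * d b

end GD

/-!
For a differential operator `A = ∑ aᵢ ∂ⁱ` and any `B`, the product is `A ∘ B = ∑ aᵢ (∂ⁱ ∘ B)`,
where `(∂ ∘ B)ₘ = B'ₘ + Bₘ₋₁`: the generalized Leibniz rule in the definition of `pmul` is just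
the binomial expansion of `∂ⁱ ∘ B`. Linearity, compatibility with `∂ ∘ ·` and associativity of
such products, and their supports and leading coefficients, all follow from this formula.

The identity is proved by induction on `j`. Put `Wⱼ = -∑ₗ Vʲₗ ∂ˡ`, `Yⱼ = ∂ʲ E L⁻¹` (of order
`≤ j - 1`) and `Pⱼ = (Yⱼ)₊`. From `Yⱼ₊₁ = ∂ ∘ Yⱼ` we get `Pⱼ₊₁ = ∂ ∘ Pⱼ + cⱼ`, with `cⱼ` the
coefficient of `∂⁻¹` in `Yⱼ`, so applying `∂` to the identity for `j` gives
`∂ʲ⁺¹ E = ∂ ∘ Wⱼ - cⱼ (L - λ) + Pⱼ₊₁ (L - λ)`. Substituting the identity for `j` into `Yⱼ`,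
`cⱼ = (Wⱼ L⁻¹)₋₁ + (Pⱼ - Pⱼ ∘ λL⁻¹)₋₁ = -Vʲₙ`, as `Pⱼ ∘ λL⁻¹` has order `≤ j - n - 2 < -1`.
Finally the recursion for `V` says precisely that `∂ ∘ Wⱼ + Vʲₙ (L - λ) = Wⱼ₊₁`.
-/

open Function Set

namespace GD

variable {R : Type} [CommRing R] {d : R → R}

def IsDeriv.toDerivation (hd : IsDeriv d) : Derivation ℤ R R :=
  Derivation.mk' (AddMonoidHom.mk' d hd.1).toIntLinearMap fun a b => by
    simp [hd.2 a b, add_comm, mul_comm]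

namespace IsDeriv

variable (hd : IsDeriv d)
include hd

theorem map_zero : d 0 = 0 := hd.toDerivation.map_zero

theorem map_neg (a : R) : d (-a) = -d a := hd.toDerivation.map_neg a

theorem map_sub (a b : R) : d (a - b) = d a - d b := hd.toDerivation.map_sub a b

theorem map_sum {ι : Type*} (s : Finset ι) (f : ι → R) : d (∑ i ∈ s, f i) = ∑ i ∈ s, d (f i) :=
  _root_.map_sum hd.toDerivation f s

theorem map_natCast_mul (k : ℕ) (a : R) : d (k * a) = k * d a := by
  rw [hd.2, show d k = 0 from hd.toDerivation.map_natCast k, zero_mul, zero_add]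

end IsDeriv

/-- `∂ ∘ A`, by the Leibniz rule `∂ ∘ a = a' + a ∂`. -/
def dcomp (d : R → R) (A : PDO R) : PDO R := fun m => d (A m) + A (m - 1)

theorem dcomp_apply (A : PDO R) (m : ℤ) : dcomp d A m = d (A m) + A (m - 1) := rfl

theorem dcomp_add (hd : IsDeriv d) (A B : PDO R) : dcomp d (A + B) = dcomp d A + dcomp d B := by
  funext m
  simp only [dcomp_apply, Pi.add_apply, hd.1]
  ring

theorem dcomp_sub (hd : IsDeriv d) (A B : PDO R) : dcomp d (A - B) = dcomp d A - dcomp d B := by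
  funext m
  simp only [dcomp_apply, Pi.sub_apply, hd.map_sub]
  ring

theorem iterate_dcomp_apply (hd : IsDeriv d) (i : ℕ) (B : PDO R) (m : ℤ) :
    (dcomp d)^[i] B m = ∑ k ∈ Finset.range (i + 1), (i.choose k : R) * d^[k] (B (m - i + k)) := by
  induction i generalizing m with
  | zero => simp
  | succ i ih =>
    set g : ℕ → R := fun k => d^[k] (B (m - (i + 1 : ℕ) + k))
    have hderiv (k : ℕ) :
        d ((i.choose k : R) * d^[k] (B (m - i + k))) = (i.choose k : R) * g (k + 1) := by
      rw [hd.map_natCast_mul, ← iterate_succ_apply' d]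
      congr 3
      push_cast
      ring
    have hshift (k : ℕ) : d^[k] (B (m - 1 - i + k)) = g k := by
      simp only [g]
      congr 2
      push_cast
      ring
    rw [iterate_succ_apply', dcomp_apply, ih, ih, hd.map_sum]
    simp only [hderiv, hshift]
    rw [Finset.sum_choose_succ_mul (fun k _ => g k) i, add_comm]

theorem pmul_eq_sum_iterate_dcomp (hd : IsDeriv d) {N : ℕ} {A : PDO R}
    (hA : support A ⊆ Icc 0 (N : ℤ)) (B : PDO R) :
    pmul d A B = ∑ i ∈ Finset.range (N + 1), A i • (dcomp d)^[i] B := by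
  funext m
  let e : ℕ × ℕ ↪ ℤ × ℕ := Nat.castEmbedding.prodMap (Embedding.refl ℕ)
  let f : ℤ × ℕ → R := fun p => (Ring.choose p.1 p.2 : ℤ) • (A p.1 * d^[p.2] (B (m - p.1 + p.2)))
  have hf : support f ⊆ ((Finset.range (N + 1) ×ˢ Finset.range (N + 1)).map e : Finset _) := by
    rintro ⟨i, k⟩ hik
    have hAi : A i ≠ 0 := fun h => hik (by simp [f, h])
    obtain ⟨hi0, hiN⟩ := hA hAi
    lift i to ℕ using hi0
    have hki : k ≤ i := by
      by_contra! h
      exact hik (by simp [f, Ring.choose_natCast, Nat.choose_eq_zero_of_lt h])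
    simp only [Finset.coe_map, Finset.coe_product, Finset.coe_range, Set.mem_image, Set.mem_prod,
      Set.mem_Iio, Prod.exists]
    exact ⟨i, k, ⟨by omega, by omega⟩, rfl⟩
  rw [pmul, finsum_eq_sum_of_support_subset f hf, Finset.sum_map, Finset.sum_product,
    Finset.sum_apply]
  refine Finset.sum_congr rfl fun i hi => ?_
  rw [Pi.smul_apply, smul_eq_mul, iterate_dcomp_apply hd, Finset.mul_sum]
  symm
  refine Finset.sum_subset (by simp at hi ⊢; omega) ?_ |>.trans (Finset.sum_congr rfl ?_)
  · intro k _ hk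
    simp only [Finset.mem_range, not_lt] at hk
    simp [Nat.choose_eq_zero_of_lt hk]
  · intro k _
    simp [f, e, Ring.choose_natCast]
    ring

theorem support_sum_subset {ι : Type*} {s : Finset ι} {F : ι → PDO R} {S : Set ℤ}
    (h : ∀ i ∈ s, support (F i) ⊆ S) : support (∑ i ∈ s, F i) ⊆ S := by
  rw [Finset.sum_fn]
  exact (Finset.support_sum s F).trans (iUnion₂_subset h)

theorem support_term_subset_Icc (a : R) {j N : ℕ} (h : j ≤ N) :
    support (term a j) ⊆ Icc 0 (N : ℤ) :=
  support_subset_iff'.2 fun m hm => if_neg fun hmj => hm (by subst hmj; simpa using h)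

theorem support_sum_range_term_subset (f : ℕ → R) {N K : ℕ} (h : N ≤ K + 1) :
    support (∑ l ∈ Finset.range N, term (f l) l) ⊆ Icc 0 (K : ℤ) :=
  support_sum_subset fun l hl => support_term_subset_Icc (f l) (by simp at hl; omega)

theorem sum_range_term_apply_natCast (f : ℕ → R) (N q : ℕ) :
    (∑ l ∈ Finset.range N, term (f l) l) q = if q < N then f q else 0 := by
  simp [Finset.sum_apply, term]

theorem sum_range_term_apply_of_neg (f : ℕ → R) (N : ℕ) {m : ℤ} (hm : m < 0) :
    (∑ l ∈ Finset.range N, term (f l) l) m = 0 := by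
  rw [Finset.sum_apply]
  exact Finset.sum_eq_zero fun l _ => if_neg (by omega)

theorem term_apply_natCast (a : R) (j q : ℕ) : term a j q = if q = j then a else 0 := by
  simp [term]

section Support

variable (hd : IsDeriv d)
include hd

theorem support_dcomp_subset_Ici {B : PDO R} {a : ℤ} (hB : support B ⊆ Ici a) :
    support (dcomp d B) ⊆ Ici a := by
  have h := support_subset_iff'.1 hB
  refine support_subset_iff'.2 fun m hm => ?_
  simp only [mem_Ici, not_le] at h hm
  rw [dcomp_apply, h m hm, h (m - 1) (by omega), hd.map_zero, add_zero]

theorem support_dcomp_subset_Iic {B : PDO R} {b : ℤ} (hB : support B ⊆ Iic b) :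
    support (dcomp d B) ⊆ Iic (b + 1) := by
  have h := support_subset_iff'.1 hB
  refine support_subset_iff'.2 fun m hm => ?_
  simp only [mem_Iic, not_le] at h hm
  rw [dcomp_apply, h m (by omega), h (m - 1) (by omega), hd.map_zero, add_zero]

theorem support_iterate_dcomp_subset_Iic {B : PDO R} {b : ℤ} (hB : support B ⊆ Iic b) (i : ℕ) :
    support ((dcomp d)^[i] B) ⊆ Iic (b + i) := by
  induction i with
  | zero => simpa using hB
  | succ i ih =>
    rw [iterate_succ_apply', Nat.cast_succ, ← add_assoc]
    exact support_dcomp_subset_Iic hd ih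

theorem support_iterate_dcomp_subset_Icc {B : PDO R} {M : ℕ} (hB : support B ⊆ Icc 0 (M : ℤ))
    (i : ℕ) : support ((dcomp d)^[i] B) ⊆ Icc 0 ((M + i : ℕ) : ℤ) := by
  rw [← Ici_inter_Iic] at hB ⊢
  refine subset_inter ?_ ?_
  · exact (MapsTo.iterate (f := dcomp d) (s := {B | support B ⊆ Ici 0})
      (fun _ => support_dcomp_subset_Ici hd) i) (hB.trans inter_subset_left)
  · exact_mod_cast support_iterate_dcomp_subset_Iic hd (hB.trans inter_subset_right) i

theorem iterate_dcomp_apply_add {B : PDO R} {b : ℤ} (hB : support B ⊆ Iic b) (i : ℕ) :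
    (dcomp d)^[i] B (b + i) = B b := by
  induction i with
  | zero => simp
  | succ i ih =>
    have hzero := support_subset_iff'.1 (support_iterate_dcomp_subset_Iic hd hB i) (b + (i + 1))
    rw [iterate_succ_apply', dcomp_apply, Nat.cast_succ, hzero (by simp), hd.map_zero, zero_add,
      ← add_assoc, add_sub_cancel_right, ih]

end Support

theorem pmul_zero_left (B : PDO R) : pmul d 0 B = 0 := by
  funext m
  simp [pmul]

section Product

variable (hd : IsDeriv d)
include hd

theorem pmul_term_left (a : R) (j : ℕ) (B : PDO R) :
    pmul d (term a j) B = a • (dcomp d)^[j] B := by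
  rw [pmul_eq_sum_iterate_dcomp hd (support_term_subset_Icc a le_rfl),
    Finset.sum_eq_single_of_mem j (by simp)]
  · simp [term]
  · intro i _ hij
    simp [term, hij]

theorem pmul_term_zero_left (a : R) (B : PDO R) : pmul d (term a 0) B = a • B :=
  pmul_term_left hd a 0 B

theorem support_pmul_subset_Icc {N M : ℕ} {A B : PDO R} (hA : support A ⊆ Icc 0 (N : ℤ))
    (hB : support B ⊆ Icc 0 (M : ℤ)) : support (pmul d A B) ⊆ Icc 0 ((N + M : ℕ) : ℤ) := by
  rw [pmul_eq_sum_iterate_dcomp hd hA]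
  refine support_sum_subset fun i hi => (support_const_smul_subset _ _).trans <|
    (support_iterate_dcomp_subset_Icc hd hB i).trans (Icc_subset_Icc le_rfl ?_)
  simp only [Finset.mem_range] at hi
  omega

theorem support_pmul_subset_Iic {N : ℕ} {A B : PDO R} {t b : ℤ} (hA : support A ⊆ Icc 0 (N : ℤ))
    (hAt : support A ⊆ Iic t) (hB : support B ⊆ Iic b) : support (pmul d A B) ⊆ Iic (t + b) := by
  rw [pmul_eq_sum_iterate_dcomp hd hA]
  refine support_sum_subset fun i _ => ?_
  by_cases hi : (i : ℤ) ≤ t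
  · exact (support_const_smul_subset _ _).trans <|
      (support_iterate_dcomp_subset_Iic hd hB i).trans (Iic_subset_Iic.2 (by omega))
  · rw [support_subset_iff'.1 hAt i (by simpa using hi), zero_smul, support_zero]
    exact empty_subset _

theorem pmul_apply_add {N : ℕ} {A B : PDO R} {b : ℤ} (hA : support A ⊆ Icc 0 (N : ℤ))
    (hB : support B ⊆ Iic b) : pmul d A B (N + b) = A N * B b := by
  rw [pmul_eq_sum_iterate_dcomp hd hA, Finset.sum_apply, Finset.sum_eq_single_of_mem N (by simp)]
  · rw [Pi.smul_apply, add_comm, iterate_dcomp_apply_add hd hB, smul_eq_mul]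
  · intro i hi hiN
    have hlt : i < N := by simp at hi; omega
    rw [Pi.smul_apply, support_subset_iff'.1 (support_iterate_dcomp_subset_Iic hd hB i) _
      (by simp; omega), smul_zero]

theorem pmul_add_left {N : ℕ} {A A' : PDO R} (hA : support A ⊆ Icc 0 (N : ℤ))
    (hA' : support A' ⊆ Icc 0 (N : ℤ)) (B : PDO R) :
    pmul d (A + A') B = pmul d A B + pmul d A' B := by
  rw [pmul_eq_sum_iterate_dcomp hd hA, pmul_eq_sum_iterate_dcomp hd hA',
    pmul_eq_sum_iterate_dcomp hd (A := A + A') ((support_add _ _).trans (union_subset hA hA')),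
    ← Finset.sum_add_distrib]
  simp only [Pi.add_apply, add_smul]

theorem pmul_sub_left {N : ℕ} {A A' : PDO R} (hA : support A ⊆ Icc 0 (N : ℤ))
    (hA' : support A' ⊆ Icc 0 (N : ℤ)) (B : PDO R) :
    pmul d (A - A') B = pmul d A B - pmul d A' B := by
  rw [pmul_eq_sum_iterate_dcomp hd hA, pmul_eq_sum_iterate_dcomp hd hA',
    pmul_eq_sum_iterate_dcomp hd (A := A - A') ((support_sub _ _).trans (union_subset hA hA')),
    ← Finset.sum_sub_distrib]
  simp only [Pi.sub_apply, sub_smul]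

theorem pmul_sum_smul_left {K : ℕ} {ι : Type*} (s : Finset ι) (a : ι → R) {X : ι → PDO R}
    (hX : ∀ i ∈ s, support (X i) ⊆ Icc 0 (K : ℤ)) (C : PDO R) :
    pmul d (∑ i ∈ s, a i • X i) C = ∑ i ∈ s, a i • pmul d (X i) C := by
  have hsum : support (∑ i ∈ s, a i • X i) ⊆ Icc 0 (K : ℤ) :=
    support_sum_subset fun i hi => (support_const_smul_subset _ _).trans (hX i hi)
  rw [pmul_eq_sum_iterate_dcomp hd hsum,
    Finset.sum_congr rfl fun i hi => congrArg (a i • ·) (pmul_eq_sum_iterate_dcomp hd (hX i hi) C)]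
  simp only [Finset.sum_apply, Finset.sum_smul, Finset.smul_sum, smul_smul]
  exact Finset.sum_comm

theorem pmul_sub_right {N : ℕ} {A : PDO R} (hA : support A ⊆ Icc 0 (N : ℤ)) (B B' : PDO R) :
    pmul d A (B - B') = pmul d A B - pmul d A B' := by
  have hsub : Semiconj₂ (dcomp d) (· - ·) (· - ·) := dcomp_sub hd
  simp only [pmul_eq_sum_iterate_dcomp hd hA, hsub.iterate _ B B', smul_sub, Finset.sum_sub_distrib]

theorem pmul_dcomp_left {N : ℕ} {A : PDO R} (hA : support A ⊆ Icc 0 (N : ℤ)) (B : PDO R) :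
    pmul d (dcomp d A) B = dcomp d (pmul d A B) := by
  have hA0 : A (-1) = 0 := support_subset_iff'.1 hA _ (by simp)
  have hAN : A (N + 1) = 0 := support_subset_iff'.1 hA _ (by simp)
  funext m
  rw [pmul_eq_sum_iterate_dcomp hd (A := dcomp d A) (support_iterate_dcomp_subset_Icc hd hA 1),
    pmul_eq_sum_iterate_dcomp hd hA]
  simp only [Finset.sum_apply, Pi.smul_apply, smul_eq_mul, dcomp_apply, add_mul,
    Finset.sum_add_distrib, hd.map_sum, hd.2]
  rw [Finset.sum_range_succ (fun i => d (A i) * _), Finset.sum_range_succ' (fun i => A (i - 1) * _)]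
  simp only [Nat.cast_succ, hAN, hA0, hd.map_zero, zero_mul, add_zero, Nat.cast_zero, zero_sub,
    add_sub_cancel_right, iterate_succ_apply', dcomp_apply, mul_add, Finset.sum_add_distrib]
  ring

theorem pmul_iterate_dcomp_left {N : ℕ} {A : PDO R} (hA : support A ⊆ Icc 0 (N : ℤ)) (B : PDO R)
    (i : ℕ) : pmul d ((dcomp d)^[i] A) B = (dcomp d)^[i] (pmul d A B) := by
  induction i with
  | zero => rfl
  | succ i ih =>
    rw [iterate_succ_apply', iterate_succ_apply',
      pmul_dcomp_left hd (support_iterate_dcomp_subset_Icc hd hA i), ih]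

theorem pmul_assoc {N M : ℕ} {A B : PDO R} (hA : support A ⊆ Icc 0 (N : ℤ))
    (hB : support B ⊆ Icc 0 (M : ℤ)) (C : PDO R) :
    pmul d (pmul d A B) C = pmul d A (pmul d B C) := by
  have hX : ∀ i ∈ Finset.range (N + 1),
      support ((dcomp d)^[i] B) ⊆ Icc 0 ((M + N : ℕ) : ℤ) := fun i hi =>
    (support_iterate_dcomp_subset_Icc hd hB i).trans
      (Icc_subset_Icc le_rfl (by simp at hi; omega))
  rw [pmul_eq_sum_iterate_dcomp hd hA B, pmul_sum_smul_left hd _ _ hX,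
    pmul_eq_sum_iterate_dcomp hd hA]
  simp only [pmul_iterate_dcomp_left hd hB]

end Product

theorem plus_dcomp (hd : IsDeriv d) (Y : PDO R) :
    plus (dcomp d Y) = dcomp d (plus Y) + term (Y (-1)) 0 := by
  funext m
  simp only [plus, dcomp_apply, Pi.add_apply, term]
  rcases lt_trichotomy m 0 with h | rfl | h
  · simp [h.not_ge, show ¬ 1 ≤ m by omega, h.ne, hd.map_zero]
  · simp
  · simp [h.le, show 1 ≤ m by omega, h.ne']

theorem plus_eq_zero {Y : PDO R} (hY : support Y ⊆ Iio 0) : plus Y = 0 := by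
  funext m
  rw [plus, Pi.zero_apply]
  split_ifs with h
  · exact support_subset_iff'.1 hY m (not_lt.2 h)
  · rfl

theorem support_plus_subset_Icc {Y : PDO R} {b : ℤ} (hY : support Y ⊆ Iic b) :
    support (plus Y) ⊆ Icc 0 b := by
  refine support_subset_iff'.2 fun m hm => ?_
  rw [plus]
  split_ifs with h
  · exact support_subset_iff'.1 hY m fun hb => hm ⟨h, hb⟩
  · rfl

theorem dcomp_neg_sum_term_add_smul (hd : IsDeriv d) {n : ℕ} {lam : R} {u v w : ℕ → R} {L : PDO R}
    (hL : L = term 1 ((n : ℤ) + 1) - ∑ l ∈ Finset.range n, term (u l) l) (hun : u n = 0)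
    (h0 : w 0 = d (v 0) + v n * (u 0 + lam))
    (hl : ∀ l, 1 ≤ l → l ≤ n → w l = d (v l) + v (l - 1) + u l * v n) :
    dcomp d (-∑ l ∈ Finset.range (n + 1), term (v l) l) + v n • (L - term lam 0) =
      -∑ l ∈ Finset.range (n + 1), term (w l) l := by
  rw [hL, ← Nat.cast_succ, ← Nat.cast_zero]
  funext m
  simp only [Pi.add_apply, Pi.sub_apply, Pi.neg_apply, Pi.smul_apply, smul_eq_mul, dcomp_apply,
    hd.map_neg]
  rcases lt_or_ge m 0 with hm | hm
  · simp [sum_range_term_apply_of_neg _ _ hm,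
      sum_range_term_apply_of_neg _ _ (by omega : m - 1 < 0), term, hm.ne,
      show m ≠ n + 1 by omega, hd.map_zero]
  lift m to ℕ using hm
  rcases m with _ | l
  · rw [Nat.cast_zero, zero_sub, sum_range_term_apply_of_neg _ _ (by omega : (-1 : ℤ) < 0),
      ← Nat.cast_zero]
    simp only [sum_range_term_apply_natCast, term_apply_natCast, Nat.succ_pos,
      (Nat.succ_ne_zero n).symm, reduceIte, h0]
    rcases n.eq_zero_or_pos with rfl | hn
    · simp only [hun, lt_irrefl, reduceIte]
      ring
    · simp only [hn, reduceIte]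
      ring
  rw [show ((l + 1 : ℕ) : ℤ) - 1 = l by push_cast; ring]
  simp only [sum_range_term_apply_natCast, term_apply_natCast, Nat.succ_ne_zero, reduceIte]
  split_ifs <;> first | omega | skip
  · rw [hl (l + 1) (by omega) (by omega), Nat.add_sub_cancel]
    ring
  · obtain rfl : n = l + 1 := by omega
    rw [hl (l + 1) le_add_self le_rfl, Nat.add_sub_cancel, hun]
    ring
  · obtain rfl : l = n := by omega
    rw [hd.map_zero]
    ring
  · rw [hd.map_zero]
    ring

section Inverse

variable (hd : IsDeriv d) {n : ℕ} {L Linv : PDO R} (hL : support L ⊆ Icc 0 ((n + 1 : ℕ) : ℤ))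
  (hLinv : support Linv ⊆ Iic (-(n + 1 : ℤ))) (hinv : pmul d L Linv = one)
include hd hL hLinv hinv

theorem apply_neg_succ_of_pmul_eq_one (hLtop : L (n + 1 : ℕ) = 1) : Linv (-(n + 1 : ℤ)) = 1 := by
  have h := pmul_apply_add hd hL hLinv
  rwa [hinv, hLtop, one_mul, Nat.cast_succ, add_neg_cancel, eq_comm] at h

theorem pmul_add_pmul_apply_neg_one (hLtop : L (n + 1 : ℕ) = 1) (lam : R) {W P : PDO R}
    (hW : support W ⊆ Icc 0 (n : ℤ)) (hP : support P ⊆ Icc 0 (n : ℤ))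
    (hPt : support P ⊆ Iic (n - 1)) :
    pmul d (W + pmul d P (L - term lam 0)) Linv (-1) = W n := by
  have hlam : support (term lam 0) ⊆ Icc 0 ((n + 1 : ℕ) : ℤ) :=
    support_term_subset_Icc lam (j := 0) (Nat.zero_le _)
  have hM : support (L - term lam 0) ⊆ Icc 0 ((n + 1 : ℕ) : ℤ) :=
    (support_sub _ _).trans (union_subset hL hlam)
  have hPM := support_pmul_subset_Icc hd hP hM
  rw [pmul_add_left hd (hW.trans (Icc_subset_Icc le_rfl (by omega))) hPM, pmul_assoc hd hP hM,
    pmul_sub_left hd hL hlam, hinv, pmul_term_zero_left hd,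
    pmul_sub_right hd hP, Pi.add_apply, Pi.sub_apply]
  have hWLinv : pmul d W Linv (-1) = W n * Linv (-(n + 1 : ℤ)) := by
    rw [← pmul_apply_add hd hW hLinv]
    ring_nf
  have hPone : pmul d P one (-1) = 0 := by
    exact support_subset_iff'.1 (support_pmul_subset_Icc hd hP
      (support_term_subset_Icc (1 : R) (j := 0) le_rfl)) _ (by simp)
  have hPLinv : pmul d P (lam • Linv) (-1) = 0 :=
    support_subset_iff'.1 (support_pmul_subset_Iic hd hP hPt
      ((support_const_smul_subset _ _).trans hLinv)) _ (by simp; omega)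
  rw [hWLinv, apply_neg_succ_of_pmul_eq_one hd hL hLinv hinv hLtop, hPone, hPLinv, mul_one,
    sub_zero, add_zero]

theorem dcomp_eq_of_eq_add_pmul_plus (hLtop : L (n + 1 : ℕ) = 1) (lam : R) {j : ℕ} (hj : j ≤ n)
    {X W : PDO R} (hX : support X ⊆ Icc 0 ((n + j : ℕ) : ℤ)) (hW : support W ⊆ Icc 0 (n : ℤ))
    (h : X = W + pmul d (plus (pmul d X Linv)) (L - term lam 0)) :
    dcomp d X = dcomp d W - W n • (L - term lam 0) +
      pmul d (plus (pmul d (dcomp d X) Linv)) (L - term lam 0) := by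
  have hYt : support (pmul d X Linv) ⊆ Iic (j - 1) :=
    (support_pmul_subset_Iic hd hX (hX.trans Icc_subset_Iic_self) hLinv).trans
      (Iic_subset_Iic.2 (by push_cast; omega))
  have hP : support (plus (pmul d X Linv)) ⊆ Icc 0 (n : ℤ) :=
    (support_plus_subset_Icc hYt).trans (Icc_subset_Icc le_rfl (by omega))
  have hc : pmul d X Linv (-1) = W n := by
    rw [h]
    refine pmul_add_pmul_apply_neg_one hd hL hLinv hinv hLtop lam hW hP ?_
    exact (support_plus_subset_Icc hYt).trans
      (Icc_subset_Iic_self.trans (Iic_subset_Iic.2 (by omega)))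
  rw [pmul_dcomp_left hd hX, plus_dcomp hd, hc,
    pmul_add_left hd (A := dcomp d _) (A' := term _ 0) (support_iterate_dcomp_subset_Icc hd hP 1)
      (support_term_subset_Icc (W n) (j := 0) (Nat.zero_le _)),
    pmul_term_zero_left hd, pmul_dcomp_left hd hP]
  conv_lhs => rw [h]
  rw [dcomp_add hd]
  abel

end Inverse

end GD

open GD in
theorem gd_lemma41_general {R : Type} [CommRing R] (d : R → R) (hd : GD.IsDeriv d)
    (n : ℕ) (lam : R)
    (u : ℕ → R) (hun : u n = 0)
    (V : ℕ → ℕ → R)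
    (hrec0 : ∀ k ≤ n, V (k + 1) 0 = d (V k 0) + V k n * (u 0 + lam))
    (hrecl : ∀ k ≤ n, ∀ l, 1 ≤ l → l ≤ n →
      V (k + 1) l = d (V k l) + V k (l - 1) + u l * V k n)
    (L : PDO R)
    (hL : L = term 1 ((n : ℤ) + 1) - ∑ j ∈ Finset.range n, term (u j) (j : ℤ))
    (Linv : PDO R)
    (hinv1 : pmul d L Linv = GD.one)
    (hord : ∀ i : ℤ, -((n : ℤ) + 1) < i → Linv i = 0)
    (E : PDO R)
    (hE : E = - ∑ j ∈ Finset.range (n + 1), term (V 0 j) (j : ℤ)) :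
    ∀ j ≤ n + 1,
      pmul d (term 1 (j : ℤ)) E =
        - (∑ l ∈ Finset.range (n + 1), term (V j l) (l : ℤ)) +
          pmul d (GD.plus (pmul d (pmul d (term 1 (j : ℤ)) E) Linv))
            (L - term lam 0) := by
  have hW (j : ℕ) :
      support (-∑ l ∈ Finset.range (n + 1), term (V j l) (l : ℤ)) ⊆ Icc 0 (n : ℤ) :=
    (support_neg _).subset.trans (support_sum_range_term_subset _ le_rfl)
  have hEsupp : support E ⊆ Icc 0 (n : ℤ) := hE ▸ hW 0
  have hLsupp : support L ⊆ Icc 0 ((n + 1 : ℕ) : ℤ) := hL ▸ (support_sub _ _).trans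
    (union_subset (by exact_mod_cast support_term_subset_Icc (1 : R) (le_refl (n + 1)))
      (support_sum_range_term_subset _ (by omega)))
  have hLtop : L (n + 1 : ℕ) = 1 := by
    rw [hL, Pi.sub_apply, sum_range_term_apply_natCast, if_neg (by omega), Nat.cast_succ]
    simp [term]
  have hLinv : support Linv ⊆ Iic (-(n + 1 : ℤ)) :=
    support_subset_iff'.2 fun i hi => hord i (by simpa using hi)
  intro j hj
  simp only [pmul_term_left hd, one_smul]
  induction j with
  | zero =>
    have hE0 : plus (pmul d E Linv) = 0 := plus_eq_zero <|
      (support_pmul_subset_Iic hd hEsupp (hEsupp.trans Icc_subset_Iic_self) hLinv).trans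
        fun i hi => by simp only [mem_Iic, mem_Iio] at hi ⊢; omega
    rw [iterate_zero, id, hE0, pmul_zero_left, add_zero, hE]
  | succ j ih =>
    rw [iterate_succ_apply']
    refine (dcomp_eq_of_eq_add_pmul_plus hd hLsupp hLinv hinv1 hLtop lam (by omega)
      (support_iterate_dcomp_subset_Icc hd hEsupp j) (hW j) (ih (by omega))).trans
      (congrArg (· + _) ?_)
    simp only [Pi.neg_apply, sum_range_term_apply_natCast, Nat.lt_succ_self, reduceIte, neg_smul,
      sub_neg_eq_add]
    exact dcomp_neg_sum_term_add_smul hd hL hun (hrec0 j (by omega)) (hrecl j (by omega))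

open GD in
/-- Lemma 4.1: with `L = ∂^{n+1} - ∑_{j<n} u_j ∂^j` and the
coefficients `V^j_l` defined by the recursion (5.9)/(extev) from the first row,
and `E = -∑_{j≤n} V^0_j ∂^j`, one has, for every `j = 0, …, n+1`,
`∂^j E = -∑_{l≤n} V^j_l ∂^l + (∂^j E L^{-1})₊ (L - λ)`. -/
theorem gd_lemma41 {R : Type} [CommRing R] (d : R → R) (hd : GD.IsDeriv d)
    (n : ℕ) (hn : 0 < n) (lam : R) (hlam : d lam = 0)
    (u : ℕ → R) (hun : u n = 0)
    (V : ℕ → ℕ → R)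
    (hrec0 : ∀ k ≤ n, V (k + 1) 0 = d (V k 0) + V k n * (u 0 + lam))
    (hrecl : ∀ k ≤ n, ∀ l, 1 ≤ l → l ≤ n →
      V (k + 1) l = d (V k l) + V k (l - 1) + u l * V k n)
    (L : PDO R)
    (hL : L = term 1 ((n : ℤ) + 1) - ∑ j ∈ Finset.range n, term (u j) (j : ℤ))
    (Linv : PDO R)
    (hinv1 : pmul d L Linv = GD.one) (hinv2 : pmul d Linv L = GD.one)
    (hord : ∀ i : ℤ, -((n : ℤ) + 1) < i → Linv i = 0)
    (E : PDO R)
    (hE : E = - ∑ j ∈ Finset.range (n + 1), term (V 0 j) (j : ℤ)) :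
    ∀ j ≤ n + 1,
      pmul d (term 1 (j : ℤ)) E =
        - (∑ l ∈ Finset.range (n + 1), term (V j l) (l : ℤ)) +
          pmul d (GD.plus (pmul d (pmul d (term 1 (j : ℤ)) E) Linv))
            (L - term lam 0) :=
  gd_lemma41_general d hd n lam u hun V hrec0 hrecl L hL Linv hinv1 hord E hE
end
end

section
/- Let (M, P_0, P_1) be a bihamiltonian manifold with MR reduction to N = S/E via the projection π: S → N, and let Γ_S be the space of sections of i_S*(D⁰) whose restrictions to vectors tangent to S are pullbacks of 1-forms on N. Then Γ_S is closed under the bracket on 1-forms {·,·}_{P_λ}, and the map J_S: Γ_S → X*(N) defined by π*(J_S(β)) = i_S*β is a Lie algebra morphism onto the 1-forms of N with the bracket induced by the reduced Poisson pencil P^N_λ; in particular ⟨{β₁,β₂}_{P_λ}, Y⟩ = 0 for all Y ∈ D and β₁, β₂ ∈ Γ_S. -/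
/-! A coordinate model of Poisson geometry: the manifold is a Euclidean space
`ℝᵐ` (a global chart), a bivector field is a smooth field of skew-symmetric
linear maps `P : T*M → TM` (cotangent and tangent spaces being identified with
`ℝᵐ` via the inner ℝ product), `gradient f` represents the differential `df`, and
Lie derivatives are expressed through `fderiv`. -/

noncomputable section

/-- A Casimir function of `P₀`. -/
def IsCasimir {m : ℕ} (P0 : Pt m → Pt m →L[ℝ] Pt m) (f : Pt m → ℝ) : Prop :=
  ContDiff ℝ (⊤ : ℕ∞) f ∧ ∀ p, P0 p (gradient f p) = 0


local notation "⟪" x ", " y "⟫" => (inner ℝ x y : ℝ)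

lemma inner_gradient {k : ℕ} (f : Pt k → ℝ) (x v : Pt k) :
    ⟪gradient f x, v⟫ = fderiv ℝ f x v := by
  show ⟪(InnerProductSpace.toDual ℝ (Pt k)).symm (fderiv ℝ f x), v⟫ = _
  exact InnerProductSpace.toDual_symm_apply

lemma contDiff_gradient {k : ℕ} {f : Pt k → ℝ} (hf : ContDiff ℝ (⊤ : ℕ∞) f) :
    ContDiff ℝ (⊤ : ℕ∞) (gradient f) := by
  have h1 : ContDiff ℝ (⊤ : ℕ∞) (fderiv ℝ f) := hf.fderiv_right (m := (⊤ : ℕ∞)) (by simp)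
  exact ((InnerProductSpace.toDual ℝ (Pt k)).symm.contDiff).comp h1

lemma gradient_inner_const {k : ℕ} (c x : Pt k) :
    gradient (fun z : Pt k => ⟪c, z⟫) x = c := by
  have h1 : (fun z : Pt k => ⟪c, z⟫) = ⇑(innerSL ℝ c) := by
    funext z; simp
  show (InnerProductSpace.toDual ℝ (Pt k)).symm (fderiv ℝ (fun z : Pt k => ⟪c, z⟫) x) = c
  rw [h1, ContinuousLinearMap.fderiv]
  have h2 : (innerSL ℝ c : Pt k →L[ℝ] ℝ) = InnerProductSpace.toDual ℝ (Pt k) c := by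
    ext z; simp [InnerProductSpace.toDual_apply_apply]
  rw [h2, LinearIsometryEquiv.symm_apply_apply]

lemma fderiv_comp_apply' {E F G : Type*} [NormedAddCommGroup E] [NormedSpace ℝ E]
    [NormedAddCommGroup F] [NormedSpace ℝ F] [NormedAddCommGroup G] [NormedSpace ℝ G]
    {f : E → F} {g : F → G} {y : E} (hg : DifferentiableAt ℝ g (f y))
    (hf : DifferentiableAt ℝ f y) (w : E) :
    fderiv ℝ (fun z => g (f z)) y w = fderiv ℝ g (f y) (fderiv ℝ f y w) := by
  rw [show (fun z => g (f z)) = g ∘ f from rfl, fderiv_comp y hg hf]; rfl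

lemma fderiv_clm_apply_const {E F G : Type*} [NormedAddCommGroup E] [NormedSpace ℝ E]
    [NormedAddCommGroup F] [NormedSpace ℝ F] [NormedAddCommGroup G] [NormedSpace ℝ G]
    {T : E → F →L[ℝ] G} {x : E} (hT : DifferentiableAt ℝ T x) (v : F) (w : E) :
    fderiv ℝ (fun z => T z v) x w = fderiv ℝ T x w v := by
  rw [fderiv_clm_apply hT (differentiableAt_const v)]
  simp

lemma sym_snd {k l : ℕ} {f : Pt k → Pt l} (hf : ContDiff ℝ (⊤ : ℕ∞) f) (y u v : Pt k) :
    fderiv ℝ (fun z => fderiv ℝ f z v) y u = fderiv ℝ (fun z => fderiv ℝ f z u) y v := by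
  have h2 : IsSymmSndFDerivAt ℝ f y := hf.contDiffAt.isSymmSndFDerivAt (by rw [minSmoothness_of_isRCLikeNormedField]; exact (WithTop.coe_le_coe.mpr (le_top : (2 : ℕ∞) ≤ ⊤) : ((2 : ℕ∞) : WithTop ℕ∞) ≤ _))
  have hd : DifferentiableAt ℝ (fderiv ℝ f) y :=
    ((hf.fderiv_right (m := (⊤ : ℕ∞)) (by simp)).differentiable (by simp)).differentiableAt
  rw [fderiv_clm_apply_const hd v u, fderiv_clm_apply_const hd u v]
  exact h2 u v

lemma lieT_ham {k : ℕ} {P : Pt k → Pt k →L[ℝ] Pt k} (hPs : ContDiff ℝ (⊤ : ℕ∞) P)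
    (hsk : SkewBivector P) (hJ : JacobiBivector P) {f : Pt k → ℝ} (hf : ContDiff ℝ (⊤ : ℕ∞) f)
    (x a b : Pt k) : lieT (fun p => P p (gradient f p)) P x a b = 0 := by
  set X : Pt k → Pt k := fun p => P p (gradient f p) with hX
  have hXs : ContDiff ℝ (⊤ : ℕ∞) X := hPs.clm_apply (contDiff_gradient hf)
  have hXd : DifferentiableAt ℝ X x := (hXs.differentiable (by simp)).differentiableAt
  have hg : ContDiff ℝ (⊤ : ℕ∞) (fun z : Pt k => ⟪a, z⟫) := contDiff_const.inner ℝ contDiff_id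
  have hh : ContDiff ℝ (⊤ : ℕ∞) (fun z : Pt k => ⟪b, z⟫) := contDiff_const.inner ℝ contDiff_id
  have hJx := hJ f (fun z => ⟪a, z⟫) (fun z => ⟪b, z⟫) hf hg hh x
  -- identify the three pbr terms
  have e1 : pbr P f (pbr P (fun z => ⟪a, z⟫) (fun z => ⟪b, z⟫)) x
      = - fderiv ℝ (fun y => ⟪a, P y b⟫) x (X x) := by
    have hfun : pbr P (fun z => ⟪a, z⟫) (fun z => ⟪b, z⟫) = fun y => ⟪a, P y b⟫ := by
      funext z
      show ⟪gradient (fun y : Pt k => ⟪a, y⟫) z, P z (gradient (fun y : Pt k => ⟪b, y⟫) z)⟫ = _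
      rw [gradient_inner_const, gradient_inner_const]
    rw [hfun]
    show ⟪gradient f x, P x (gradient (fun y => ⟪a, P y b⟫) x)⟫ = _
    rw [hsk x, inner_gradient]
  have e2 : pbr P (fun z => ⟪b, z⟫) (pbr P f (fun z => ⟪a, z⟫)) x
      = ⟪ContinuousLinearMap.adjoint (fderiv ℝ X x) a, P x b⟫ := by
    have hfun : pbr P f (fun z => ⟪a, z⟫) = fun z => -⟪a, X z⟫ := by
      funext z
      show ⟪gradient f z, P z (gradient (fun y => ⟪a, y⟫) z)⟫ = _
      rw [gradient_inner_const, hsk z]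
    rw [hfun]
    show ⟪gradient (fun z : Pt k => ⟪b, z⟫) x, P x (gradient (fun z => -⟪a, X z⟫) x)⟫ = _
    rw [gradient_inner_const, hsk x, inner_gradient]
    have hd : fderiv ℝ (fun z => -⟪a, X z⟫) x (P x b) = -⟪a, fderiv ℝ X x (P x b)⟫ := by
      rw [fderiv_fun_neg, ContinuousLinearMap.neg_apply,
        fderiv_inner_apply ℝ (differentiableAt_const a) hXd]
      simp
    rw [hd, ContinuousLinearMap.adjoint_inner_left]
    ring
  have e3 : pbr P (fun z => ⟪a, z⟫) (pbr P (fun z => ⟪b, z⟫) f) x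
      = ⟪a, P x (ContinuousLinearMap.adjoint (fderiv ℝ X x) b)⟫ := by
    have hfun : pbr P (fun z => ⟪b, z⟫) f = fun z => ⟪b, X z⟫ := by
      funext z
      show ⟪gradient (fun y : Pt k => ⟪b, y⟫) z, P z (gradient f z)⟫ = _
      rw [gradient_inner_const]
    rw [hfun]
    show ⟪gradient (fun z : Pt k => ⟪a, z⟫) x, P x (gradient (fun z => ⟪b, X z⟫) x)⟫ = _
    rw [gradient_inner_const, hsk x, inner_gradient]
    have hd : fderiv ℝ (fun z => ⟪b, X z⟫) x (P x a) = ⟪b, fderiv ℝ X x (P x a)⟫ := by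
      rw [fderiv_inner_apply ℝ (differentiableAt_const b) hXd]; simp
    rw [hd, ← ContinuousLinearMap.adjoint_inner_left, hsk x]
    ring
  rw [e1, e2, e3] at hJx
  simp only [lieT]
  linarith

set_option maxHeartbeats 2000000 in
/-- closure of `Γ_S` and the morphism property of `J_S`: in the
Marsden–Ratiu reduction of a bihamiltonian manifold `(M, P₀, P₁)`, with
symplectic leaf `S` of `P₀` (realized by an embedding `ι : S → M` with
`T_yS = range (P₀)_{ι y}`), distribution `D` spanned by `P₁df` for `f` Casimir of
`P₀`, and quotient `N = S/E` (realized by a submersion `π : S → N` whose fibres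
are the leaves of the distribution `E` induced by `D`), let `Γ_S` be the space of
sections `β` of `i_S^*(D⁰)` whose restrictions to `TS` are pullbacks `π^*α` of
1-forms `α` on `N`.  Then the bracket `{β₁,β₂}_{P_λ}` of elements of `Γ_S`
(defined by formula (1003), pairing against vector fields `X` of `M`) again lies
in `Γ_S` — in particular `⟨{β₁,β₂}_{P_λ}, Y⟩ = 0` for `Y ∈ D` — and the map
`J_S : Γ_S → X*(N)`, `π^*(J_S β) = i_S^*β`, is a morphism of Lie algebras onto the
1-forms of `N` endowed with the bracket of the reduced Poisson pencil `P^N_λ`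
(which satisfies `P^N_λ ∘ J_S = π_* ∘ P_λ`):
`J_S({β₁,β₂}_{P_λ}) = {J_S β₁, J_S β₂}_{P^N_λ}`. -/
theorem gammaS_closed_and_JS_morphism {m s n : ℕ}
    (P0 P1 : Pt m → Pt m →L[ℝ] Pt m)
    (hs0 : ContDiff ℝ (⊤ : ℕ∞) P0) (hs1 : ContDiff ℝ (⊤ : ℕ∞) P1)
    (hsk0 : SkewBivector P0) (hsk1 : SkewBivector P1)
    (hcompat : ∀ mu : ℝ, JacobiBivector (fun x => P1 x + mu • P0 x))
    (lam : ℝ)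
    -- the symplectic leaf `S`, embedded in `M` by `ι`
    (ι : Pt s → Pt m) (hιs : ContDiff ℝ (⊤ : ℕ∞) ι) (hιinj : Function.Injective ι)
    (hιimm : ∀ y, Function.Injective (fderiv ℝ ι y))
    (hleaf : ∀ y, Set.range (fderiv ℝ ι y) = Set.range (P0 (ι y)))
    -- the quotient `N = S/E`, realized by the submersion `π`
    (π : Pt s → Pt n) (hπs : ContDiff ℝ (⊤ : ℕ∞) π) (hπsurj : Function.Surjective π)
    (hπsub : ∀ y, Function.Surjective (fderiv ℝ π y))
    -- the fibres of `π` are the leaves of the distribution `E` induced by `D`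
    (hEfib : ∀ (y : Pt s) (w : Pt s), fderiv ℝ π y w = 0 ↔
      fderiv ℝ ι y w ∈ Submodule.span ℝ
        {z : Pt m | ∃ f : Pt m → ℝ, IsCasimir P0 f ∧
          z = P1 (ι y) (gradient f (ι y))})
    -- `β₁, β₂ ∈ Γ_S`, with `J_S βᵢ = αᵢ`
    (β1 β2 : Pt s → Pt m) (hβ1s : ContDiff ℝ (⊤ : ℕ∞) β1) (hβ2s : ContDiff ℝ (⊤ : ℕ∞) β2)
    (hβ1D : ∀ (y : Pt s) (f : Pt m → ℝ), IsCasimir P0 f →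
      (inner ℝ (β1 y) (P1 (ι y) (gradient f (ι y))) : ℝ) = 0)
    (hβ2D : ∀ (y : Pt s) (f : Pt m → ℝ), IsCasimir P0 f →
      (inner ℝ (β2 y) (P1 (ι y) (gradient f (ι y))) : ℝ) = 0)
    (α1 α2 : Pt n → Pt n) (hα1s : ContDiff ℝ (⊤ : ℕ∞) α1) (hα2s : ContDiff ℝ (⊤ : ℕ∞) α2)
    (hβ1π : ∀ (y : Pt s) (w : Pt s),
      (inner ℝ (β1 y) (fderiv ℝ ι y w) : ℝ) = inner ℝ (α1 (π y)) (fderiv ℝ π y w))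
    (hβ2π : ∀ (y : Pt s) (w : Pt s),
      (inner ℝ (β2 y) (fderiv ℝ ι y w) : ℝ) = inner ℝ (α2 (π y)) (fderiv ℝ π y w))
    -- the vector fields `P_λ βᵢ` are tangent to `S`; `wᵢ` are their
    -- representatives on `S`
    (w1 w2 : Pt s → Pt s) (hw1s : ContDiff ℝ (⊤ : ℕ∞) w1) (hw2s : ContDiff ℝ (⊤ : ℕ∞) w2)
    (hw1 : ∀ y, fderiv ℝ ι y (w1 y) = (P1 (ι y) + lam • P0 (ι y)) (β1 y))
    (hw2 : ∀ y, fderiv ℝ ι y (w2 y) = (P1 (ι y) + lam • P0 (ι y)) (β2 y))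
    -- the reduced Poisson pencil `P^N_λ` on `N`, characterized by
    -- `P^N_λ ∘ J_S = π_* ∘ P_λ`
    (PN : Pt n → Pt n →L[ℝ] Pt n) (hPNs : ContDiff ℝ (⊤ : ℕ∞) PN)
    (hPN : ∀ (β : Pt s → Pt m) (αa : Pt n → Pt n) (wb : Pt s → Pt s),
      ContDiff ℝ (⊤ : ℕ∞) β → ContDiff ℝ (⊤ : ℕ∞) αa → ContDiff ℝ (⊤ : ℕ∞) wb →
      (∀ (y : Pt s) (f : Pt m → ℝ), IsCasimir P0 f →
        (inner ℝ (β y) (P1 (ι y) (gradient f (ι y))) : ℝ) = 0) →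
      (∀ (y : Pt s) (w : Pt s),
        (inner ℝ (β y) (fderiv ℝ ι y w) : ℝ) = inner ℝ (αa (π y)) (fderiv ℝ π y w)) →
      (∀ y, fderiv ℝ ι y (wb y) = (P1 (ι y) + lam • P0 (ι y)) (β y)) →
      ∀ y, fderiv ℝ π y (wb y) = PN (π y) (αa (π y)))
    -- `γ = {β₁,β₂}_{P_λ}` : the bracket on 1-forms, defined by formula (1003)
    (γ : Pt s → Pt m)
    (hγ : ∀ X : Pt m → Pt m, ContDiff ℝ (⊤ : ℕ∞) X → ∀ y : Pt s,
      (inner ℝ (γ y) (X (ι y)) : ℝ) =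
        fderiv ℝ (fun z => (inner ℝ (β2 z) (X (ι z)) : ℝ)) y (w1 y)
          - fderiv ℝ (fun z => (inner ℝ (β1 z) (X (ι z)) : ℝ)) y (w2 y)
          - lieT X (fun p => P1 p + lam • P0 p) (ι y) (β1 y) (β2 y)) :
    -- (1) `Γ_S` is closed under the bracket: `{β₁,β₂}_{P_λ}` annihilates `D` …
    (∀ (y : Pt s) (f : Pt m → ℝ), IsCasimir P0 f →
      (inner ℝ (γ y) (P1 (ι y) (gradient f (ι y))) : ℝ) = 0) ∧
    -- (2) … and `J_S` is a Lie algebra morphism: `J_S γ` is the bracket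
    -- `{α₁,α₂}_{P^N_λ}` of the 1-forms `α₁ = J_S β₁`, `α₂ = J_S β₂` on `N`
    (∀ δ : Pt n → Pt n,
      (∀ Z : Pt n → Pt n, ContDiff ℝ (⊤ : ℕ∞) Z → ∀ q : Pt n,
        (inner ℝ (δ q) (Z q) : ℝ) =
          fderiv ℝ (fun q' => (inner ℝ (α2 q') (Z q') : ℝ)) q (PN q (α1 q))
            - fderiv ℝ (fun q' => (inner ℝ (α1 q') (Z q') : ℝ)) q (PN q (α2 q))
            - lieT Z PN q (α1 q) (α2 q)) →
      ∀ (y : Pt s) (w : Pt s),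
        (inner ℝ (γ y) (fderiv ℝ ι y w) : ℝ) = inner ℝ (δ (π y)) (fderiv ℝ π y w)) := by
  have hskl : ∀ (p : Pt m) (xx yy : Pt m),
      (inner ℝ xx ((P1 p + lam • P0 p) yy) : ℝ) = -(inner ℝ yy ((P1 p + lam • P0 p) xx) : ℝ) := by
    intro p xx yy
    simp only [ContinuousLinearMap.add_apply, ContinuousLinearMap.smul_apply,
      inner_add_right, real_inner_smul_right, inner_add_left, real_inner_smul_left]
    rw [hsk1 p xx yy, hsk0 p xx yy]
    ring
  have hsklS : SkewBivector (fun p => P1 p + lam • P0 p) := fun p xx yy => hskl p xx yy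
  have hPl : ContDiff ℝ (⊤ : ℕ∞) (fun p => P1 p + lam • P0 p) := hs1.add (hs0.const_smul lam)
  constructor
  · intro y f hf
    have hXs : ContDiff ℝ (⊤ : ℕ∞) (fun p => P1 p (gradient f p)) :=
      hs1.clm_apply (contDiff_gradient hf.1)
    have hzero2 : (fun z : Pt s => (inner ℝ (β2 z) (P1 (ι z) (gradient f (ι z))) : ℝ))
        = fun _ => (0 : ℝ) := funext fun z => hβ2D z f hf
    have hzero1 : (fun z : Pt s => (inner ℝ (β1 z) (P1 (ι z) (gradient f (ι z))) : ℝ))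
        = fun _ => (0 : ℝ) := funext fun z => hβ1D z f hf
    have hXeq : (fun p => P1 p (gradient f p))
        = fun p => (P1 p + lam • P0 p) (gradient f p) := by
      funext p
      simp [hf.2 p]
    have hlie : lieT (fun p => P1 p (gradient f p)) (fun p => P1 p + lam • P0 p) (ι y)
        (β1 y) (β2 y) = 0 := by
      rw [hXeq]
      exact lieT_ham hPl hsklS (hcompat lam) hf.1 (ι y) (β1 y) (β2 y)
    have := hγ (fun p => P1 p (gradient f p)) hXs y
    rw [hzero2, hzero1, hlie] at this
    simpa using this
  · intro δ hδ y w
    -- notation-free abbreviations appear verbatim below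
    have hπw1 : ∀ z, fderiv ℝ π z (w1 z) = PN (π z) (α1 (π z)) :=
      hPN β1 α1 w1 hβ1s hα1s hw1s hβ1D hβ1π hw1
    have hπw2 : ∀ z, fderiv ℝ π z (w2 z) = PN (π z) (α2 (π z)) :=
      hPN β2 α2 w2 hβ2s hα2s hw2s hβ2D hβ2π hw2
    -- differentiability facts
    have hα1π : DifferentiableAt ℝ (fun z => α1 (π z)) y :=
      (hα1s.differentiable (by simp) (π y)).comp y (hπs.differentiable (by simp) y)
    have hα2π : DifferentiableAt ℝ (fun z => α2 (π z)) y :=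
      (hα2s.differentiable (by simp) (π y)).comp y (hπs.differentiable (by simp) y)
    have hPNπ : DifferentiableAt ℝ (fun z => PN (π z)) y :=
      (hPNs.differentiable (by simp) (π y)).comp y (hπs.differentiable (by simp) y)
    have hPl2 : ContDiff ℝ (⊤ : ℕ∞) (fun z => P1 (ι z) + lam • P0 (ι z)) := hPl.comp hιs
    have hQd : DifferentiableAt ℝ (fun z => P1 (ι z) + lam • P0 (ι z)) y :=
      (hPl2.differentiable (by simp)) y
    -- Step 1: the value of the bracket against the constant extension of ι_* w
    have hγc : (inner ℝ (γ y) (fderiv ℝ ι y w) : ℝ)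
        = (inner ℝ (fderiv ℝ β2 y (w1 y)) (fderiv ℝ ι y w) : ℝ)
          - (inner ℝ (fderiv ℝ β1 y (w2 y)) (fderiv ℝ ι y w) : ℝ)
          - fderiv ℝ (fun p => (inner ℝ (β1 y) ((P1 p + lam • P0 p) (β2 y)) : ℝ)) (ι y)
              (fderiv ℝ ι y w) := by
      have h := hγ (fun _ => fderiv ℝ ι y w) contDiff_const y
      simp only [lieT] at h
      rw [fderiv_inner_apply ℝ (hβ2s.differentiable (by simp) y) (differentiableAt_const _),
          fderiv_inner_apply ℝ (hβ1s.differentiable (by simp) y) (differentiableAt_const _)] at h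
      simp only [fderiv_fun_const, Pi.zero_apply, ContinuousLinearMap.zero_apply, inner_zero_right,
        map_zero, inner_zero_left, add_zero, zero_add, sub_zero] at h
      exact h
    -- Step 2: the value of the reduced bracket against a constant field
    have hδe : ∀ v : Pt n, (inner ℝ (δ (π y)) v : ℝ)
        = (inner ℝ (fderiv ℝ α2 (π y) (PN (π y) (α1 (π y)))) v : ℝ)
          - (inner ℝ (fderiv ℝ α1 (π y) (PN (π y) (α2 (π y)))) v : ℝ)
          - fderiv ℝ (fun q' => (inner ℝ (α1 (π y)) (PN q' (α2 (π y))) : ℝ)) (π y) v := by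
      intro v
      have h := hδ (fun _ => v) contDiff_const (π y)
      simp only [lieT] at h
      rw [fderiv_inner_apply ℝ (hα2s.differentiable (by simp) (π y)) (differentiableAt_const _),
          fderiv_inner_apply ℝ (hα1s.differentiable (by simp) (π y)) (differentiableAt_const _)] at h
      simp only [fderiv_fun_const, Pi.zero_apply, ContinuousLinearMap.zero_apply, inner_zero_right,
        map_zero, inner_zero_left, add_zero, zero_add, sub_zero] at h
      exact h
    -- Step 3: differentiating the defining identity of Γ_S along S
    have Egen : ∀ (β : Pt s → Pt m) (α : Pt n → Pt n), ContDiff ℝ (⊤ : ℕ∞) β → ContDiff ℝ (⊤ : ℕ∞) α →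
        (∀ (z : Pt s) (v : Pt s),
          (inner ℝ (β z) (fderiv ℝ ι z v) : ℝ) = inner ℝ (α (π z)) (fderiv ℝ π z v)) →
        ∀ v w' : Pt s,
          (inner ℝ (fderiv ℝ β y w') (fderiv ℝ ι y v) : ℝ)
            = (inner ℝ (α (π y)) (fderiv ℝ (fun z => fderiv ℝ π z v) y w') : ℝ)
              + (inner ℝ (fderiv ℝ α (π y) (fderiv ℝ π y w')) (fderiv ℝ π y v) : ℝ)
              - (inner ℝ (β y) (fderiv ℝ (fun z => fderiv ℝ ι z v) y w') : ℝ) := by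
      intro β α hβ hα hβα v w'
      have hfun : (fun z => (inner ℝ (β z) (fderiv ℝ ι z v) : ℝ))
          = fun z => (inner ℝ (α (π z)) (fderiv ℝ π z v) : ℝ) := funext fun z => hβα z v
      have hdι : DifferentiableAt ℝ (fun z => fderiv ℝ ι z v) y :=
        (((hιs.fderiv_right (m := (⊤ : ℕ∞)) (by simp)).differentiable (by simp)) y).clm_apply (differentiableAt_const v)
      have hdπ : DifferentiableAt ℝ (fun z => fderiv ℝ π z v) y :=
        (((hπs.fderiv_right (m := (⊤ : ℕ∞)) (by simp)).differentiable (by simp)) y).clm_apply (differentiableAt_const v)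
      have hαπd : DifferentiableAt ℝ (fun z => α (π z)) y :=
        (hα.differentiable (by simp) (π y)).comp y (hπs.differentiable (by simp) y)
      have h := congrArg (fun F => fderiv ℝ F y w') hfun
      rw [fderiv_inner_apply ℝ (hβ.differentiable (by simp) y) hdι,
          fderiv_inner_apply ℝ hαπd hdπ,
          fderiv_comp_apply' (hα.differentiable (by simp) (π y)) (hπs.differentiable (by simp) y) w']
          at h
      linarith [h]
    have hA0 := Egen β2 α2 hβ2s hα2s hβ2π w (w1 y)
    have hB0 := Egen β1 α1 hβ1s hα1s hβ1π w (w2 y)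
    have hE2w := Egen β2 α2 hβ2s hα2s hβ2π (w1 y) w
    have hE1w := Egen β1 α1 hβ1s hα1s hβ1π (w2 y) w
    rw [sym_snd hπs y (w1 y) w, sym_snd hιs y (w1 y) w, hπw1 y] at hA0
    rw [sym_snd hπs y (w2 y) w, sym_snd hιs y (w2 y) w, hπw2 y] at hB0
    rw [hπw1 y] at hE2w
    rw [hπw2 y] at hE1w
    -- Step 4: the Lie-derivative term pulled back to S
    have hFd : DifferentiableAt ℝ (fun p => (inner ℝ (β1 y) ((P1 p + lam • P0 p) (β2 y)) : ℝ)) (ι y) :=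
      (differentiableAt_const (β1 y)).inner ℝ
        ((hPl.differentiable (by simp) (ι y)).clm_apply (differentiableAt_const (β2 y)))
    have hCchain : fderiv ℝ (fun p => (inner ℝ (β1 y) ((P1 p + lam • P0 p) (β2 y)) : ℝ)) (ι y)
          (fderiv ℝ ι y w)
        = (inner ℝ (β1 y) (fderiv ℝ (fun z => P1 (ι z) + lam • P0 (ι z)) y w (β2 y)) : ℝ) := by
      have h1 : fderiv ℝ (fun z => (inner ℝ (β1 y) ((P1 (ι z) + lam • P0 (ι z)) (β2 y)) : ℝ)) y w
          = fderiv ℝ (fun p => (inner ℝ (β1 y) ((P1 p + lam • P0 p) (β2 y)) : ℝ)) (ι y)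
              (fderiv ℝ ι y w) :=
        fderiv_comp_apply' (g := fun p => (inner ℝ (β1 y) ((P1 p + lam • P0 p) (β2 y)) : ℝ))
          hFd (hιs.differentiable (by simp) y) w
      have h2 : fderiv ℝ (fun z => (inner ℝ (β1 y) ((P1 (ι z) + lam • P0 (ι z)) (β2 y)) : ℝ)) y w
          = (inner ℝ (β1 y) (fderiv ℝ (fun z => P1 (ι z) + lam • P0 (ι z)) y w (β2 y)) : ℝ) := by
        rw [fderiv_inner_apply ℝ (differentiableAt_const (β1 y))
              (hQd.clm_apply (differentiableAt_const (β2 y))),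
            fderiv_clm_apply hQd (differentiableAt_const (β2 y))]
        simp only [fderiv_fun_const, Pi.zero_apply, ContinuousLinearMap.add_apply,
          ContinuousLinearMap.coe_comp', Function.comp_apply, ContinuousLinearMap.zero_apply,
          map_zero, ContinuousLinearMap.flip_apply, inner_zero_left, inner_zero_right,
          add_zero, zero_add]
      rw [← h1, h2]
    -- Step 5: expansion of the derivative of z ↦ ⟨β₁ z, P_λ(ι z) β₂ z⟩
    have hDgA : fderiv ℝ (fun z => (inner ℝ (β1 z) ((P1 (ι z) + lam • P0 (ι z)) (β2 z)) : ℝ)) y w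
        = (inner ℝ (β1 y) ((P1 (ι y) + lam • P0 (ι y)) (fderiv ℝ β2 y w)) : ℝ)
          + (inner ℝ (β1 y) (fderiv ℝ (fun z => P1 (ι z) + lam • P0 (ι z)) y w (β2 y)) : ℝ)
          + (inner ℝ (fderiv ℝ β1 y w) ((P1 (ι y) + lam • P0 (ι y)) (β2 y)) : ℝ) := by
      rw [fderiv_inner_apply ℝ (hβ1s.differentiable (by simp) y)
            (hQd.clm_apply (hβ2s.differentiable (by simp) y)),
          fderiv_clm_apply hQd (hβ2s.differentiable (by simp) y)]
      simp only [ContinuousLinearMap.add_apply, ContinuousLinearMap.coe_comp',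
        Function.comp_apply, ContinuousLinearMap.flip_apply, inner_add_right]
    -- the same function, seen on N
    have hfunAB : (fun z => (inner ℝ (β1 z) ((P1 (ι z) + lam • P0 (ι z)) (β2 z)) : ℝ))
        = fun z => (inner ℝ (α1 (π z)) (PN (π z) (α2 (π z))) : ℝ) := by
      funext z
      rw [← hw2 z, hβ1π z (w2 z), hπw2 z]
    have hDgB : fderiv ℝ (fun z => (inner ℝ (α1 (π z)) (PN (π z) (α2 (π z))) : ℝ)) y w
        = (inner ℝ (α1 (π y)) (PN (π y) (fderiv ℝ α2 (π y) (fderiv ℝ π y w))) : ℝ)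
          + (inner ℝ (α1 (π y)) (fderiv ℝ (fun z => PN (π z)) y w (α2 (π y))) : ℝ)
          + (inner ℝ (fderiv ℝ α1 (π y) (fderiv ℝ π y w)) (PN (π y) (α2 (π y))) : ℝ) := by
      rw [fderiv_inner_apply ℝ hα1π (hPNπ.clm_apply hα2π),
          fderiv_clm_apply hPNπ hα2π]
      simp only [ContinuousLinearMap.add_apply, ContinuousLinearMap.coe_comp',
        Function.comp_apply, ContinuousLinearMap.flip_apply, inner_add_right]
      rw [fderiv_comp_apply' (hα1s.differentiable (by simp) (π y)) (hπs.differentiable (by simp) y) w,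
          fderiv_comp_apply' (hα2s.differentiable (by simp) (π y)) (hπs.differentiable (by simp) y) w]
    -- Step 6: the middle term of hDgB is the N-side Lie-derivative term
    have hGd : DifferentiableAt ℝ (fun q' => (inner ℝ (α1 (π y)) (PN q' (α2 (π y))) : ℝ)) (π y) :=
      (differentiableAt_const _).inner ℝ
        ((hPNs.differentiable (by simp) (π y)).clm_apply (differentiableAt_const _))
    have hCN : (inner ℝ (α1 (π y)) (fderiv ℝ (fun z => PN (π z)) y w (α2 (π y))) : ℝ)
        = fderiv ℝ (fun q' => (inner ℝ (α1 (π y)) (PN q' (α2 (π y))) : ℝ)) (π y)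
            (fderiv ℝ π y w) := by
      have h1 : fderiv ℝ (fun z => (inner ℝ (α1 (π y)) (PN (π z) (α2 (π y))) : ℝ)) y w
          = fderiv ℝ (fun q' => (inner ℝ (α1 (π y)) (PN q' (α2 (π y))) : ℝ)) (π y)
              (fderiv ℝ π y w) :=
        fderiv_comp_apply' (g := fun q' => (inner ℝ (α1 (π y)) (PN q' (α2 (π y))) : ℝ))
          hGd (hπs.differentiable (by simp) y) w
      have h2 : fderiv ℝ (fun z => (inner ℝ (α1 (π y)) (PN (π z) (α2 (π y))) : ℝ)) y w
          = (inner ℝ (α1 (π y)) (fderiv ℝ (fun z => PN (π z)) y w (α2 (π y))) : ℝ) := by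
        rw [fderiv_inner_apply ℝ (differentiableAt_const _)
              (hPNπ.clm_apply (differentiableAt_const _)),
            fderiv_clm_apply hPNπ (differentiableAt_const _)]
        simp only [fderiv_fun_const, Pi.zero_apply, ContinuousLinearMap.add_apply,
          ContinuousLinearMap.coe_comp', Function.comp_apply, ContinuousLinearMap.zero_apply,
          map_zero, ContinuousLinearMap.flip_apply, inner_zero_left, inner_zero_right,
          add_zero, zero_add]
      rw [← h1, h2]
    -- Step 7: skew-symmetry links on S
    have hlink2 : (inner ℝ (β1 y) ((P1 (ι y) + lam • P0 (ι y)) (fderiv ℝ β2 y w)) : ℝ)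
        = - (inner ℝ (fderiv ℝ β2 y w) (fderiv ℝ ι y (w1 y)) : ℝ) := by
      rw [hw1 y]; exact hskl (ι y) (β1 y) (fderiv ℝ β2 y w)
    have hlink1 : (inner ℝ (fderiv ℝ β1 y w) ((P1 (ι y) + lam • P0 (ι y)) (β2 y)) : ℝ)
        = (inner ℝ (fderiv ℝ β1 y w) (fderiv ℝ ι y (w2 y)) : ℝ) := by
      rw [hw2 y]
    -- Step 8: skewness of `PN` at `α1 (π y)`, from consistency of the bracket
    -- formula for linear fields (case `α2 (π y) ≠ 0`)
    have hPNskew : α2 (π y) ≠ 0 → ∀ v : Pt n,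
        (inner ℝ (α1 (π y)) (PN (π y) v) : ℝ)
          = - (inner ℝ v (PN (π y) (α1 (π y))) : ℝ) := by
      intro hb v
      have hZs : ContDiff ℝ (⊤ : ℕ∞) (fun q' : Pt n => (inner ℝ v q' : ℝ) • α2 (π y)) :=
        (contDiff_const.inner ℝ contDiff_id).smul contDiff_const
      have hZd : ∀ x, DifferentiableAt ℝ (fun q' : Pt n => (inner ℝ v q' : ℝ) • α2 (π y)) x :=
        fun x => (hZs.differentiable (by simp)) x
      have hinner : (fun q' : Pt n => (inner ℝ v q' : ℝ)) = ⇑(innerSL ℝ v) := by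
        funext z; simp
      have hT : fderiv ℝ (fun q' : Pt n => (inner ℝ v q' : ℝ) • α2 (π y)) (π y)
          = (innerSL ℝ v).smulRight (α2 (π y)) := by
        rw [fderiv_smul_const ((differentiableAt_const v).inner ℝ differentiableAt_fun_id),
          hinner, ContinuousLinearMap.fderiv]
      have hadj : ∀ u : Pt n,
          ContinuousLinearMap.adjoint ((innerSL ℝ v).smulRight (α2 (π y))) u
            = (inner ℝ u (α2 (π y)) : ℝ) • v := by
        intro u
        refine ext_inner_right ℝ fun x => ?_
        rw [ContinuousLinearMap.adjoint_inner_left]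
        simp only [ContinuousLinearMap.smulRight_apply, innerSL_apply_apply, real_inner_smul_left,
          real_inner_smul_right]
        ring
      have h := hδ (fun q' : Pt n => (inner ℝ v q' : ℝ) • α2 (π y)) hZs (π y)
      simp only [lieT] at h
      rw [fderiv_inner_apply ℝ (hα2s.differentiable (by simp) (π y)) (hZd (π y)),
          fderiv_inner_apply ℝ (hα1s.differentiable (by simp) (π y)) (hZd (π y)), hT] at h
      simp only [hadj, ContinuousLinearMap.smulRight_apply, innerSL_apply_apply] at h
      simp only [real_inner_smul_right, real_inner_smul_left, map_smul, smul_eq_mul] at h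
      have hδb := hδe (α2 (π y))
      have hkey : (inner ℝ (α2 (π y)) (α2 (π y)) : ℝ)
          * ((inner ℝ (α1 (π y)) (PN (π y) v) : ℝ)
              + (inner ℝ v (PN (π y) (α1 (π y))) : ℝ)) = 0 := by
        linear_combination (inner ℝ v (π y) : ℝ) * hδb - h
      rcases mul_eq_zero.mp hkey with h0 | h0
      · exact absurd (inner_self_eq_zero.mp h0) hb
      · linarith
    -- Final assembly
    rw [hγc, hδe (fderiv ℝ π y w), hCchain]
    have hABeq : fderiv ℝ (fun z => (inner ℝ (β1 z) ((P1 (ι z) + lam • P0 (ι z)) (β2 z)) : ℝ)) y w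
        = fderiv ℝ (fun z => (inner ℝ (α1 (π z)) (PN (π z) (α2 (π z))) : ℝ)) y w := by
      rw [hfunAB]
    by_cases hb : α2 (π y) = 0
    · -- degenerate case: use the transposed expansion of the middle term
      have hfunAD : (fun z => (inner ℝ (β1 z) ((P1 (ι z) + lam • P0 (ι z)) (β2 z)) : ℝ))
          = fun z => -(inner ℝ (α2 (π z)) (PN (π z) (α1 (π z))) : ℝ) := by
        funext z
        rw [hskl (ι z) (β1 z) (β2 z), ← hw1 z, hβ2π z (w1 z), hπw1 z]
      have hADeq : fderiv ℝ
            (fun z => (inner ℝ (β1 z) ((P1 (ι z) + lam • P0 (ι z)) (β2 z)) : ℝ)) y w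
          = fderiv ℝ (fun z => -(inner ℝ (α2 (π z)) (PN (π z) (α1 (π z))) : ℝ)) y w := by
        rw [hfunAD]
      have hDgD : fderiv ℝ (fun z => -(inner ℝ (α2 (π z)) (PN (π z) (α1 (π z))) : ℝ)) y w
          = - (inner ℝ (fderiv ℝ α2 (π y) (fderiv ℝ π y w)) (PN (π y) (α1 (π y))) : ℝ) := by
        have hgd : DifferentiableAt ℝ (fun z => PN (π z) (α1 (π z))) y :=
          hPNπ.clm_apply hα1π
        rw [fderiv_fun_neg, ContinuousLinearMap.neg_apply,
            fderiv_inner_apply ℝ hα2π hgd,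
            fderiv_comp_apply' (hα2s.differentiable (by simp) (π y))
              (hπs.differentiable (by simp) y) w, hb]
        simp
      have hCN0 : fderiv ℝ (fun q' => (inner ℝ (α1 (π y)) (PN q' (α2 (π y))) : ℝ)) (π y)
          (fderiv ℝ π y w) = 0 := by
        have hz : (fun q' => (inner ℝ (α1 (π y)) (PN q' (α2 (π y))) : ℝ)) = fun _ => (0 : ℝ) := by
          funext q'; rw [hb]; simp
        rw [hz, fderiv_fun_const]; simp
      have hPNb0 : PN (π y) (α2 (π y)) = 0 := by rw [hb]; simp
      have hz1 : (inner ℝ (fderiv ℝ α1 (π y) (fderiv ℝ π y w)) (PN (π y) (α2 (π y))) : ℝ) = 0 := by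
        rw [hPNb0]; simp
      have hz2 : (inner ℝ (fderiv ℝ α1 (π y) (PN (π y) (α2 (π y)))) (fderiv ℝ π y w) : ℝ) = 0 := by
        rw [hPNb0]; simp
      linarith [hA0, hB0, hE2w, hE1w, hDgA, hADeq, hDgD, hCN0, hz1, hz2, hlink1, hlink2]
    · -- generic case
      have hskewv := hPNskew hb (fderiv ℝ α2 (π y) (fderiv ℝ π y w))
      linarith [hA0, hB0, hE2w, hE1w, hDgA, hDgB, hABeq, hCN, hlink1, hlink2, hskewv]
end
end

section
/- In the Gel'fand–Dickey setting over sl(n+1), the distribution E on the symplectic leaf S is spanned by the vector fields X_V(S) = V_x + [V,S] with V ∈ G_{AB} = {V : [V,A] = 0 and V_x + [V,B] ∈ G_A^⊥}, and the map ψ: Γ_Q → E_{n+1} sending the matrix lifting V to the differential operator E = −Σ_{j=0}^{n} V^0_j ∂^j (first row of V) is a Lie algebra homomorphism from (Γ_Q, {·,·}₁) with bracket {V₁,V₂}₁ = ∂V₂/∂t₁ − ∂V₁/∂t₂ − [V₁,V₂] to (E_{n+1}, [·,·]_L) with Radul's bracket [E,F]_L = [E,F] + W_L(E)·(F) − W_L(F)·(E)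 mod RL. -/
/-!  A self-contained model of the algebra of pseudodifferential operators on the
circle (or over an abstract differential ring `(R, d)`).

A pseudodifferential operator `A = ∑_{i ≤ N} a_i ∂^i` is encoded by the sequence of
its coefficients `A : ℤ → R` (`A i = a_i`, vanishing for large `i`).  The product is
the standard one, determined by the generalized Leibniz rule
`∂^i ∘ b = ∑_{k ≥ 0} C(i,k) b^{(k)} ∂^{i-k}` with generalized binomial coefficients
`C(i,k) = Ring.choose i k`. -/

noncomputable section

/-! Write `e_k = ∑_j V_{k,j} ∂^j` for the operator read off the `k`-th row of `V`. The recursion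
defining the rows says `∂ ∘ e_k = e_{k+1} + V_{k,n} L`; since the multiples `P ∘ L` are stable
under `∂ ∘ ·`, this gives `∂^c ∘ e_0 ≡ e_c` modulo `R L` for `c ≤ n + 1`. Hence
`E ∘ F = ∑_c V_{0,c} ∂^c ∘ f_0 ≡ ∑_c V_{0,c} f_c`, so that `[E, F]` is congruent to the operator
of the first row of `[V, W]`, while `∂W/∂t₁ - ∂V/∂t₂` is carried coefficientwise to
`W_L(E)·F - W_L(F)·E`. -/

namespace GD

variable {R : Type} [CommRing R] {d : R → R}

def IsDeriv.toAddMonoidHom (hd : IsDeriv d) : R →+ R := AddMonoidHom.mk' d hd.1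

lemma term_eq_single (a : R) (j : ℤ) : term a j = Pi.single j a := by
  ext m
  simp [term, Pi.single_apply]

lemma sum_term_apply (N : ℕ) (a : ℕ → R) (m : ℤ) :
    (∑ c ∈ Finset.range N, term (a c) (c : ℤ)) m
      = if 0 ≤ m ∧ m < N then a m.toNat else 0 := by
  simp only [Finset.sum_apply, term]
  split_ifs with h
  · rw [Finset.sum_eq_single_of_mem m.toNat (by simp; omega) fun c _ hc => if_neg (by omega)]
    exact if_pos (by omega)
  · exact Finset.sum_eq_zero fun c hc => if_neg (by simp at hc; omega)

/-- Right composition `B ↦ B ∘ ∂`. -/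
def compPartial : AddMonoid.End (PDO R) := AddMonoidHom.mk' (fun B m => B (m - 1)) fun _ _ => rfl

def coeffDeriv (hd : IsDeriv d) : AddMonoid.End (PDO R) := hd.toAddMonoidHom.compLeft ℤ

/-- Left composition with `∂`: `∂ ∘ b ∂^m = b' ∂^m + b ∂^(m+1)`. -/
def partialComp (hd : IsDeriv d) : AddMonoid.End (PDO R) := coeffDeriv hd + compPartial

lemma partialComp_apply (hd : IsDeriv d) (B : PDO R) (m : ℤ) :
    partialComp hd B m = d (B m) + B (m - 1) := rfl

lemma compPartial_pow_apply (j : ℕ) (B : PDO R) (m : ℤ) : (compPartial ^ j) B m = B (m - j) := by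
  induction j generalizing B with
  | zero => simp
  | succ j ih =>
    rw [pow_succ, AddMonoid.End.coe_mul, Function.comp_apply, ih]
    change B (m - j - 1) = _
    push_cast
    ring_nf

lemma coeffDeriv_pow_apply (hd : IsDeriv d) (k : ℕ) (B : PDO R) (m : ℤ) :
    (coeffDeriv hd ^ k) B m = d^[k] (B m) := by
  rw [AddMonoid.End.coe_pow]
  induction k generalizing B with
  | zero => rfl
  | succ k ih => rw [Function.iterate_succ_apply, ih]; rfl

/-- The Leibniz rule `∂^c ∘ B = ∑_k C(c,k) B^{(k)} ∂^{c-k}`: the binomial theorem for the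
commuting operators `coeffDeriv` and `compPartial`. -/
lemma partialComp_pow_apply (hd : IsDeriv d) (c : ℕ) (B : PDO R) (m : ℤ) :
    (partialComp hd ^ c) B m = ∑ k ∈ Finset.range (c + 1), c.choose k • d^[k] (B (m - c + k)) := by
  have hcomm : Commute (coeffDeriv hd) compPartial := AddMonoidHom.ext fun _ => rfl
  have hsum := congrFun (AddMonoidHom.finsetSum_apply
    (fun k => coeffDeriv hd ^ k * compPartial ^ (c - k) * (c.choose k : AddMonoid.End (PDO R)))
    (Finset.range (c + 1)) B) m
  rw [partialComp, hcomm.add_pow]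
  refine hsum.trans ?_
  rw [Finset.sum_apply]
  refine Finset.sum_congr rfl fun k hk => ?_
  rw [Finset.mem_range] at hk
  change (coeffDeriv hd ^ k) ((compPartial ^ (c - k)) (c.choose k • B)) m = _
  rw [map_nsmul, map_nsmul, Pi.smul_apply, coeffDeriv_pow_apply, compPartial_pow_apply,
    Nat.cast_sub (by omega), sub_sub_eq_add_sub, add_sub_right_comm]

lemma pmul_sum_term (hd : IsDeriv d) (N : ℕ) (a : ℕ → R) (B : PDO R) :
    pmul d (∑ c ∈ Finset.range N, term (a c) (c : ℤ)) B
      = ∑ c ∈ Finset.range N, a c • (partialComp hd ^ c) B := by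
  funext m
  set s : Finset (ℤ × ℕ) := (Finset.range N).image (Nat.cast : ℕ → ℤ) ×ˢ Finset.range N
  have hsupp : Function.support (fun p : ℤ × ℕ => (Ring.choose p.1 p.2 : ℤ) •
      ((∑ c ∈ Finset.range N, term (a c) (c : ℤ)) p.1 * d^[p.2] (B (m - p.1 + p.2)))) ⊆ s := by
    rintro ⟨i, k⟩ hik
    rw [Function.mem_support, sum_term_apply] at hik
    split_ifs at hik with hi
    · lift i to ℕ using hi.1
      rw [Ring.choose_natCast] at hik
      have hk : k ≤ i := by_contra fun hk => hik (by simp [Nat.choose_eq_zero_of_lt (not_le.1 hk)])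
      simp only [s, Finset.coe_product, Finset.coe_image, Finset.coe_range, Set.mem_prod,
        Set.mem_image, Set.mem_Iio, Nat.cast_inj, exists_eq_right]
      omega
    · simp at hik
  rw [pmul, finsum_eq_finsetSum_of_support_subset _ hsupp, Finset.sum_product,
    Finset.sum_image fun _ _ _ _ h => Nat.cast_injective h, Finset.sum_apply]
  refine Finset.sum_congr rfl fun c hc => ?_
  rw [Finset.mem_range] at hc
  simp only [sum_term_apply]
  rw [Pi.smul_apply, partialComp_pow_apply, Finset.smul_sum, if_pos (by omega),
    Int.toNat_natCast, ← Finset.sum_subset (Finset.range_subset_range.2 (by omega : c + 1 ≤ N))]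
  · refine Finset.sum_congr rfl fun k _ => ?_
    rw [Ring.choose_natCast, natCast_zsmul, smul_eq_mul, mul_smul_comm]
  · intro k _ hk
    rw [Finset.mem_range, not_lt] at hk
    rw [Ring.choose_natCast, Nat.choose_eq_zero_of_lt hk, Nat.cast_zero, zero_smul]

lemma partialComp_smul (hd : IsDeriv d) (r : R) (X : PDO R) :
    partialComp hd (r • X) = r • partialComp hd X + d r • X := by
  funext m
  simp only [partialComp_apply, Pi.add_apply, Pi.smul_apply, smul_eq_mul, hd.2]
  ring

/-- `R L`: the operators `P ∘ L` with `P` a differential operator. -/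
def rightMultiples (hd : IsDeriv d) (L : PDO R) : Submodule R (PDO R) :=
  Submodule.span R (Set.range fun c : ℕ => (partialComp hd ^ c) L)

lemma smul_mem_rightMultiples (hd : IsDeriv d) (r : R) (L : PDO R) :
    r • L ∈ rightMultiples hd L :=
  Submodule.smul_mem _ r (Submodule.subset_span ⟨0, rfl⟩)

lemma partialComp_mem_rightMultiples (hd : IsDeriv d) {L X : PDO R} (hX : X ∈ rightMultiples hd L) :
    partialComp hd X ∈ rightMultiples hd L := by
  induction hX using Submodule.span_induction with
  | mem _ h =>
    obtain ⟨c, rfl⟩ := h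
    exact Submodule.subset_span ⟨c + 1, by simp only [pow_succ']; rfl⟩
  | zero => rw [map_zero]; exact zero_mem _
  | add _ _ _ _ hX hY => rw [map_add]; exact add_mem hX hY
  | smul r X hX hdX =>
    rw [partialComp_smul]
    exact add_mem (Submodule.smul_mem _ r hdX) (Submodule.smul_mem _ (d r) hX)

lemma exists_pmul_eq_of_mem_rightMultiples (hd : IsDeriv d) {L X : PDO R}
    (hX : X ∈ rightMultiples hd L) :
    ∃ P : PDO R, (∀ m : ℤ, m < 0 → P m = 0) ∧ (∃ N : ℤ, ∀ m : ℤ, N < m → P m = 0) ∧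
      pmul d P L = X := by
  obtain ⟨g, rfl⟩ := Finsupp.mem_span_range_iff_exists_finsupp.1 hX
  obtain ⟨N, hN⟩ := Finset.exists_nat_subset_range g.support
  refine ⟨∑ c ∈ Finset.range N, term (g c) (c : ℤ), fun m hm => ?_, ⟨N, fun m hm => ?_⟩, ?_⟩
  · rw [sum_term_apply, if_neg (by omega)]
  · rw [sum_term_apply, if_neg (by omega)]
  · rw [pmul_sum_term hd]
    exact (Finsupp.sum_of_support_subset g hN (fun c a => a • (partialComp hd ^ c) L)
      fun _ _ => zero_smul R _).symm

def laxOperator (n : ℕ) (u : ℕ → R) : PDO R :=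
  term 1 ((n : ℤ) + 1) - ∑ j ∈ Finset.range n, term (u j) (j : ℤ)

lemma laxOperator_apply {n : ℕ} {u : ℕ → R} (hun : u n = 0) (m : ℤ) :
    laxOperator n u m = if m = n + 1 then 1 else if 0 ≤ m ∧ m ≤ n then -u m.toNat else 0 := by
  rw [laxOperator, Pi.sub_apply, sum_term_apply, term]
  split_ifs <;> first | omega | (rw [show m.toNat = n by omega, hun]; ring) | ring

def diffOp (n : ℕ) : (ℕ → R) →ₗ[R] PDO R where
  toFun a := ∑ j ∈ Finset.range (n + 1), term (a j) (j : ℤ)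
  map_add' a b := by simp only [term_eq_single, Pi.add_apply, Pi.single_add, Finset.sum_add_distrib]
  map_smul' r a := by simp only [term_eq_single, Pi.smul_apply, Pi.single_smul', Finset.smul_sum,
    RingHom.id_apply]

lemma diffOp_apply (n : ℕ) (a : ℕ → R) :
    diffOp n a = ∑ j ∈ Finset.range (n + 1), term (a j) (j : ℤ) := rfl

lemma map_neg_diffOp {f : R → R} (hf : ∀ a b, f (a + b) = f a + f b) (n : ℕ) (a : ℕ → R) :
    (fun m => f ((-diffOp n a) m)) = -diffOp n (fun j => f (a j)) := by
  funext m
  change AddMonoidHom.mk' f hf (-diffOp n a m) = -diffOp n (fun j => f (a j)) m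
  rw [map_neg, neg_inj]
  simp only [diffOp_apply, sum_term_apply]
  split_ifs
  exacts [rfl, map_zero _]

lemma pmul_neg_diffOp (hd : IsDeriv d) (n : ℕ) (a : ℕ → R) (B : PDO R) :
    pmul d (-diffOp n a) B = -∑ c ∈ Finset.range (n + 1), a c • (partialComp hd ^ c) B := by
  rw [← map_neg, diffOp_apply, pmul_sum_term hd, ← Finset.sum_neg_distrib]
  simp only [Pi.neg_apply, neg_smul]

/-- The recursion that determines the rows of a matrix lifting `V ∈ Γ_Q` from its first row. -/
def RowRecursion (d : R → R) (n : ℕ) (u : ℕ → R) (V : ℕ → ℕ → R) : Prop :=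
  (∀ k ≤ n, V (k + 1) 0 = d (V k 0) + V k n * u 0) ∧
    ∀ k ≤ n, ∀ l, 1 ≤ l → l ≤ n → V (k + 1) l = d (V k l) + V k (l - 1) + u l * V k n

lemma partialComp_diffOp_of_rowRecursion (hd : IsDeriv d) {n : ℕ} {u : ℕ → R} (hun : u n = 0)
    {V : ℕ → ℕ → R} (hV : RowRecursion d n u V) {k : ℕ} (hk : k ≤ n) :
    partialComp hd (diffOp n (V k)) = diffOp n (V (k + 1)) + V k n • laxOperator n u := by
  funext m
  simp only [partialComp_apply, Pi.add_apply, Pi.smul_apply, smul_eq_mul, diffOp_apply,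
    sum_term_apply, laxOperator_apply hun]
  have hd0 : d 0 = 0 := hd.toAddMonoidHom.map_zero
  obtain hm | rfl | ⟨l, rfl, hl1, hln⟩ | rfl | hm :
      m < 0 ∨ m = 0 ∨ (∃ l : ℕ, m = l ∧ 1 ≤ l ∧ l ≤ n) ∨ m = n + 1 ∨ n + 1 < m := by
    by_cases h : 1 ≤ m ∧ m ≤ n
    · exact Or.inr (Or.inr (Or.inl ⟨m.toNat, by omega, by omega, by omega⟩))
    · omega
  · simp (disch := omega) only [if_neg, hd0]
    ring
  · simp (disch := omega) only [if_pos, if_neg, Int.toNat_zero, hV.1 k hk]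
    ring
  · simp (disch := omega) only [if_pos, if_neg, Int.toNat_natCast]
    rw [hV.2 k hk l hl1 hln, show ((l : ℤ) - 1).toNat = l - 1 by omega]
    ring
  · simp (disch := omega) only [if_pos, if_neg, hd0, if_true]
    rw [show ((n : ℤ) + 1 - 1).toNat = n by omega]
    ring
  · simp (disch := omega) only [if_neg, hd0]
    ring

lemma partialComp_pow_diffOp_sub_mem (hd : IsDeriv d) {n : ℕ} {u : ℕ → R} (hun : u n = 0)
    {V : ℕ → ℕ → R} (hV : RowRecursion d n u V) {c : ℕ} (hc : c ≤ n + 1) :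
    (partialComp hd ^ c) (diffOp n (V 0)) - diffOp n (V c)
      ∈ rightMultiples hd (laxOperator n u) := by
  induction c with
  | zero => simp
  | succ c ih =>
    have hstep : (partialComp hd ^ (c + 1)) (diffOp n (V 0)) - diffOp n (V (c + 1))
        = partialComp hd ((partialComp hd ^ c) (diffOp n (V 0)) - diffOp n (V c))
          + V c n • laxOperator n u := by
      rw [map_sub, partialComp_diffOp_of_rowRecursion hd hun hV (by omega), pow_succ',
        AddMonoid.End.coe_mul, Function.comp_apply]
      abel
    rw [hstep]
    exact add_mem (partialComp_mem_rightMultiples hd (ih (by omega)))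
      (smul_mem_rightMultiples hd _ _)

/-- Modulo `R L`, `[E, F]` is the operator of the first row of `[V, W]`. -/
lemma commutator_sub_mem (hd : IsDeriv d) {n : ℕ} {u : ℕ → R} (hun : u n = 0)
    {V W : ℕ → ℕ → R} (hV : RowRecursion d n u V) (hW : RowRecursion d n u W) :
    pmul d (-diffOp n (V 0)) (-diffOp n (W 0)) - pmul d (-diffOp n (W 0)) (-diffOp n (V 0))
      - ∑ c ∈ Finset.range (n + 1), (V 0 c • diffOp n (W c) - W 0 c • diffOp n (V c))
      ∈ rightMultiples hd (laxOperator n u) := by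
  have hsplit : pmul d (-diffOp n (V 0)) (-diffOp n (W 0))
      - pmul d (-diffOp n (W 0)) (-diffOp n (V 0))
      - ∑ c ∈ Finset.range (n + 1), (V 0 c • diffOp n (W c) - W 0 c • diffOp n (V c))
      = ∑ c ∈ Finset.range (n + 1),
          (V 0 c • ((partialComp hd ^ c) (diffOp n (W 0)) - diffOp n (W c))
            - W 0 c • ((partialComp hd ^ c) (diffOp n (V 0)) - diffOp n (V c))) := by
    simp only [pmul_neg_diffOp hd, map_neg, smul_neg, Finset.sum_neg_distrib, neg_neg, smul_sub,
      Finset.sum_sub_distrib]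
    abel
  rw [hsplit]
  refine Submodule.sum_mem _ fun c hc => ?_
  rw [Finset.mem_range] at hc
  exact sub_mem (Submodule.smul_mem _ _ (partialComp_pow_diffOp_sub_mem hd hun hW (by omega)))
    (Submodule.smul_mem _ _ (partialComp_pow_diffOp_sub_mem hd hun hV (by omega)))

end GD

open GD in
/-- `∂/∂t₁ = W_L(E)·` and `∂/∂t₂ = W_L(F)·` act on coefficients as the derivations `D1`, `D2`. -/
theorem gd_psi_lie_algebra_morphism_general {R : Type} [CommRing R] (d D1 D2 : R → R)
    (hd : GD.IsDeriv d) (hD1 : GD.IsDeriv D1) (hD2 : GD.IsDeriv D2)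
    (n : ℕ) (u : ℕ → R) (hun : u n = 0)
    (V W : ℕ → ℕ → R)
    (hrec0V : ∀ k ≤ n, V (k + 1) 0 = d (V k 0) + V k n * u 0)
    (hreclV : ∀ k ≤ n, ∀ l, 1 ≤ l → l ≤ n →
      V (k + 1) l = d (V k l) + V k (l - 1) + u l * V k n)
    (hrec0W : ∀ k ≤ n, W (k + 1) 0 = d (W k 0) + W k n * u 0)
    (hreclW : ∀ k ≤ n, ∀ l, 1 ≤ l → l ≤ n →
      W (k + 1) l = d (W k l) + W k (l - 1) + u l * W k n)
    (L E F : PDO R)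
    (hL : L = term 1 ((n : ℤ) + 1) - ∑ j ∈ Finset.range n, term (u j) (j : ℤ))
    (hE : E = - ∑ j ∈ Finset.range (n + 1), term (V 0 j) (j : ℤ))
    (hF : F = - ∑ j ∈ Finset.range (n + 1), term (W 0 j) (j : ℤ)) :
    ∃ Rop : PDO R, (∀ m : ℤ, m < 0 → Rop m = 0) ∧
      (∃ N : ℤ, ∀ m : ℤ, N < m → Rop m = 0) ∧
      -- `ψ({V,W}₁) = [E,F] + W_L(E)·(F) - W_L(F)·(E) + R L`
      (- ∑ j ∈ Finset.range (n + 1),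
          term (D1 (W 0 j) - D2 (V 0 j)
            - ∑ c ∈ Finset.range (n + 1),
                (V 0 c * W c j - W 0 c * V c j)) (j : ℤ))
        = (pmul d E F - pmul d F E)
            + (fun m => D1 (F m)) - (fun m => D2 (E m)) + pmul d Rop L := by
  change E = -diffOp n (V 0) at hE
  change F = -diffOp n (W 0) at hF
  change L = laxOperator n u at hL
  subst hE hF hL
  obtain ⟨P, hP0, hPN, hPL⟩ := exists_pmul_eq_of_mem_rightMultiples hd
    (neg_mem (commutator_sub_mem hd hun ⟨hrec0V, hreclV⟩ ⟨hrec0W, hreclW⟩))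
  refine ⟨P, hP0, hPN, ?_⟩
  have hcoeffs : (fun j => D1 (W 0 j) - D2 (V 0 j)
      - ∑ c ∈ Finset.range (n + 1), (V 0 c * W c j - W 0 c * V c j))
      = (fun j => D1 (W 0 j)) - (fun j => D2 (V 0 j))
        - ∑ c ∈ Finset.range (n + 1), (V 0 c • W c - W 0 c • V c) := by
    funext j
    simp [Finset.sum_apply]
  rw [← diffOp_apply, hcoeffs, map_neg_diffOp hD1.1, map_neg_diffOp hD2.1, hPL]
  simp only [map_sub, map_sum, map_smul]
  abel

open GD in
/-- Proposition 5.4: the map `ψ`, sending a matrix lifting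
`V ∈ Γ_Q` to the differential operator `E = -∑_j V^0_j ∂^j` built from its first
row, is a Lie algebra homomorphism from `(Γ_Q, {·,·}₁)`, with the bracket
`{V,W}₁ = ∂W/∂t₁ - ∂V/∂t₂ - [V,W]`, to `(E_{n+1}, [·,·]_L)` with Radul's bracket
`[E,F]_L = [E,F] + W_L(E)·(F) - W_L(F)·(E) mod RL`.

Here the directional derivatives `∂/∂t₁, ∂/∂t₂` along the Hamiltonian vector
fields `P₁V, P₁W` are modelled by derivations `D1, D2` of the coefficient ring
which commute with `d` and whose action on the coordinates `u_j` is the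
reduced Hamiltonian vector field (redpoibis with `λ = 0`); by Proposition 5.3
these variations of `L` are exactly `W_L(E)` and `W_L(F)`, so that
`W_L(E)·(F) = ∂F/∂t₁` is the coefficientwise action of `D1` on `F`. -/
theorem gd_psi_lie_algebra_morphism {R : Type} [CommRing R] (d D1 D2 : R → R)
    (hd : GD.IsDeriv d) (hD1 : GD.IsDeriv D1) (hD2 : GD.IsDeriv D2)
    (hc1 : ∀ a, D1 (d a) = d (D1 a)) (hc2 : ∀ a, D2 (d a) = d (D2 a))
    (n : ℕ) (hn : 0 < n) (u : ℕ → R) (hun : u n = 0)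
    (V W : ℕ → ℕ → R)
    (hrec0V : ∀ k ≤ n, V (k + 1) 0 = d (V k 0) + V k n * u 0)
    (hreclV : ∀ k ≤ n, ∀ l, 1 ≤ l → l ≤ n →
      V (k + 1) l = d (V k l) + V k (l - 1) + u l * V k n)
    (hrec0W : ∀ k ≤ n, W (k + 1) 0 = d (W k 0) + W k n * u 0)
    (hreclW : ∀ k ≤ n, ∀ l, 1 ≤ l → l ≤ n →
      W (k + 1) l = d (W k l) + W k (l - 1) + u l * W k n)
    (htrV : ∑ k ∈ Finset.range (n + 1), V k k = 0)
    (htrW : ∑ k ∈ Finset.range (n + 1), W k k = 0)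
    (hupunV : 0 = d (V n n) + V n (n - 1) - ∑ l ∈ Finset.range n, u l * V l n)
    (hupunW : 0 = d (W n n) + W n (n - 1) - ∑ l ∈ Finset.range n, u l * W l n)
    (hD1u : ∀ j < n,
      D1 (u j) = V (n + 1) j - ∑ l ∈ Finset.range n, u l * V l j)
    (hD2u : ∀ j < n,
      D2 (u j) = W (n + 1) j - ∑ l ∈ Finset.range n, u l * W l j)
    (L E F : PDO R)
    (hL : L = term 1 ((n : ℤ) + 1) - ∑ j ∈ Finset.range n, term (u j) (j : ℤ))
    (hE : E = - ∑ j ∈ Finset.range (n + 1), term (V 0 j) (j : ℤ))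
    (hF : F = - ∑ j ∈ Finset.range (n + 1), term (W 0 j) (j : ℤ)) :
    ∃ Rop : PDO R, (∀ m : ℤ, m < 0 → Rop m = 0) ∧
      (∃ N : ℤ, ∀ m : ℤ, N < m → Rop m = 0) ∧
      -- `ψ({V,W}₁) = [E,F] + W_L(E)·(F) - W_L(F)·(E) + R L`
      (- ∑ j ∈ Finset.range (n + 1),
          term (D1 (W 0 j) - D2 (V 0 j)
            - ∑ c ∈ Finset.range (n + 1),
                (V 0 c * W c j - W 0 c * V c j)) (j : ℤ))
        = (pmul d E F - pmul d F E)
            + (fun m => D1 (F m)) - (fun m => D2 (E m)) + pmul d Rop L :=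
  gd_psi_lie_algebra_morphism_general d D1 D2 hd hD1 hD2 n u hun V W hrec0V hreclV hrec0W hreclW L E
    F hL hE hF
end
end
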